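/- arXiv:1911.04463 — 10 statements merged into one kernel-verified Lean document; each statement's English description precedes it below -/
import Mathlib

section
/- Let v_1,...,v_n ∈ ℝ^r, c_1,...,c_n ∈ ℝ, with 0 in the interior of convexHull {v_i}. Define Trop(W)(d) = min_i (c_i + ⟨v_i, d⟩) and let τ = min { c : (c, 0) ∈ convexHull {(c_i, v_i)} }. Then for d ∈ ℝ^r, Trop(W)(d) = τ if and only if (τ, 0) lies in the face of convexHull {(c_i,v_i)} on which the linear functional (c,v) ↦ c + ⟨v, d⟩ attains its minimum over the polytope. -/
/-! A linear functional is bounded below on the convex hull of finitely many points by its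
minimum over those points, so its minimum over the augmented Newton polytope is
`Trop(W)(d) = minᵢ (cᵢ + ⟨vᵢ, d⟩)`. Since `(τ, 0)` lies in the polytope and the functional
`(c, v) ↦ c + ⟨v, d⟩` takes the value `τ` there, `(τ, 0)` is on the lowest face exactly when
that minimum is `τ`. -/

open Finset

section ConvexHull

variable {ι E : Type*} [AddCommGroup E] [Module ℝ E]

theorem LinearMap.le_of_mem_convexHull_range {p : ι → E} (L : E →ₗ[ℝ] ℝ) {m : ℝ}
    (hm : ∀ i, m ≤ L (p i)) {x : E} (hx : x ∈ convexHull ℝ (Set.range p)) : m ≤ L x :=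
  convexHull_min (t := {u | m ≤ L u}) (Set.range_subset_iff.2 hm)
    (convex_halfSpace_ge L.isLinear m) hx

theorem LinearMap.forall_le_on_convexHull_range_iff (p : ι → E) (L : E →ₗ[ℝ] ℝ) (w : E) :
    (∀ u ∈ convexHull ℝ (Set.range p), L w ≤ L u) ↔ ∀ i, L w ≤ L (p i) :=
  ⟨fun h i => h _ (subset_convexHull ℝ _ ⟨i, rfl⟩),
    fun h _ hu => L.le_of_mem_convexHull_range h hu⟩

theorem LinearMap.inf'_eq_iff_forall_le_on_convexHull_range [Fintype ι]
    (hne : (univ : Finset ι).Nonempty) (p : ι → E) (L : E →ₗ[ℝ] ℝ) {w : E} {t : ℝ}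
    (hw : w ∈ convexHull ℝ (Set.range p)) (hLw : L w = t) :
    univ.inf' hne (fun i => L (p i)) = t ↔ ∀ u ∈ convexHull ℝ (Set.range p), L w ≤ L u := by
  have hle : univ.inf' hne (fun i => L (p i)) ≤ t :=
    hLw ▸ L.le_of_mem_convexHull_range (fun i => inf'_le _ (mem_univ i)) hw
  rw [L.forall_le_on_convexHull_range_iff, hLw, le_antisymm_iff, and_iff_right hle,
    le_inf'_iff]
  simp only [mem_univ, true_implies]

end ConvexHull

/-- Pairing with the paper's `α = (1, d)`. -/
def augmentedPairing {r : ℕ} (d : Fin r → ℝ) : ℝ × (Fin r → ℝ) →ₗ[ℝ] ℝ where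
  toFun w := w.1 + ∑ j, w.2 j * d j
  map_add' x y := by
    simp only [Prod.fst_add, Prod.snd_add, Pi.add_apply, add_mul, sum_add_distrib]
    ring
  map_smul' a x := by
    simp only [Prod.smul_fst, Prod.smul_snd, Pi.smul_apply, smul_eq_mul, mul_assoc,
      ← mul_sum, RingHom.id_apply, mul_add]

theorem stmt_1_general (r n : ℕ) (hn : 0 < n) (v : Fin n → (Fin r → ℝ)) (c : Fin n → ℝ)
    (τ : ℝ)
    (hτ : IsLeast {x : ℝ | ((x, (0 : Fin r → ℝ)) : ℝ × (Fin r → ℝ)) ∈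
        convexHull ℝ (Set.range (fun i => ((c i, v i) : ℝ × (Fin r → ℝ))))} τ)
    (d : Fin r → ℝ) :
    Finset.univ.inf' ⟨⟨0, hn⟩, Finset.mem_univ _⟩
        (fun i => c i + ∑ j, v i j * d j) = τ ↔
      ((τ, (0 : Fin r → ℝ)) : ℝ × (Fin r → ℝ)) ∈
        {w ∈ convexHull ℝ (Set.range (fun i => ((c i, v i) : ℝ × (Fin r → ℝ)))) |
          ∀ u ∈ convexHull ℝ (Set.range (fun i => ((c i, v i) : ℝ × (Fin r → ℝ)))),
            w.1 + ∑ j, w.2 j * d j ≤ u.1 + ∑ j, u.2 j * d j} := by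
  have hvalue : augmentedPairing d (τ, 0) = τ := by simp [augmentedPairing]
  exact ((augmentedPairing d).inf'_eq_iff_forall_le_on_convexHull_range _ _ hτ.1
    hvalue).trans (and_iff_right hτ.1).symm

/-- Lemma 4.7 (l:tauattainment): `Trop(W)(d) = τ` iff `(τ,0)` lies in the lowest face of the
augmented Newton polytope with respect to `(1,d)`. -/
theorem stmt_1 (r n : ℕ) (hn : 0 < n) (v : Fin n → (Fin r → ℝ)) (c : Fin n → ℝ)
    (h0 : (0 : Fin r → ℝ) ∈ interior (convexHull ℝ (Set.range v)))
    (τ : ℝ)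
    (hτ : IsLeast {x : ℝ | ((x, (0 : Fin r → ℝ)) : ℝ × (Fin r → ℝ)) ∈
        convexHull ℝ (Set.range (fun i => ((c i, v i) : ℝ × (Fin r → ℝ))))} τ)
    (d : Fin r → ℝ) :
    Finset.univ.inf' ⟨⟨0, hn⟩, Finset.mem_univ _⟩
        (fun i => c i + ∑ j, v i j * d j) = τ ↔
      ((τ, (0 : Fin r → ℝ)) : ℝ × (Fin r → ℝ)) ∈
        {w ∈ convexHull ℝ (Set.range (fun i => ((c i, v i) : ℝ × (Fin r → ℝ)))) |
          ∀ u ∈ convexHull ℝ (Set.range (fun i => ((c i, v i) : ℝ × (Fin r → ℝ)))),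
            w.1 + ∑ j, w.2 j * d j ≤ u.1 + ∑ j, u.2 j * d j} :=
  stmt_1_general r n hn v c τ hτ d
end

section
/- Let Δ ⊂ ℝ × ℝ^r be the convex hull of finitely many points (c_i, v_i), and suppose 0 lies in the interior of convexHull {v_i} ⊂ ℝ^r. Then for every face F of Δ, the intersection of F with the line ℝ × {0} contains at most one point. -/
/-!
If two distinct points `(a, 0)`, `(b, 0)` of the fibre both minimise `α` on `Δ`, then `α` vanishes
on the line `ℝ × {0}`, so the minimum value is `0` and `α (0, ·)` is nonnegative on the projection
of `Δ`, which is a neighbourhood of `0`. A linear functional that is nonnegative near `0` is zero,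
hence `α = 0` and the face is all of `Δ`.
-/

open Filter Topology LinearMap

theorem LinearMap.eq_zero_of_nonneg_of_mem_nhds {E : Type*} [AddCommGroup E] [Module ℝ E]
    [TopologicalSpace E] [ContinuousSMul ℝ E] (f : E →ₗ[ℝ] ℝ)
    {s : Set E} (hs : s ∈ 𝓝 0) (hf : ∀ x ∈ s, 0 ≤ f x) : f = 0 := by
  ext x
  have hsmul : ∀ᶠ t in 𝓝 (0 : ℝ), t • x ∈ s :=
    (zero_smul ℝ x ▸ (tendsto_id.smul_const x : Tendsto (· • x) (𝓝 (0 : ℝ)) _)).eventually hs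
  have hneg : ∀ᶠ t in 𝓝 (0 : ℝ), -t ∈ {t : ℝ | t • x ∈ s} :=
    (neg_zero (G := ℝ) ▸ tendsto_neg (0 : ℝ)).eventually hsmul
  obtain ⟨t, ⟨h₁, h₂⟩, ht⟩ :=
    ((hsmul.and hneg).filter_mono nhdsWithin_le_nhds |>.and self_mem_nhdsWithin).exists
      (f := 𝓝[≠] (0 : ℝ))
  replace h₁ := hf _ h₁
  replace h₂ := hf _ h₂
  simp only [map_smul, smul_eq_mul, neg_mul, neg_nonneg] at h₁ h₂
  exact (mul_eq_zero.mp (le_antisymm h₂ h₁)).resolve_left ht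

theorem LinearMap.eq_zero_of_apply_eq_of_ne {K M : Type*} [Field K] [AddCommGroup M] [Module K M]
    (f : K →ₗ[K] M) {a b : K} (hab : a ≠ b) (h : f a = f b) : f = 0 := by
  have hsub : f (a - b) = 0 := by rw [map_sub, h, sub_self]
  refine ext_ring ?_
  rw [← inv_mul_cancel₀ (sub_ne_zero.mpr hab), ← smul_eq_mul, map_smul, hsub, smul_zero, zero_apply]

def lowestFace {E : Type*} [AddCommGroup E] [Module ℝ E] (α : E →ₗ[ℝ] ℝ) (Δ : Set E) : Set E :=
  {w ∈ Δ | ∀ u ∈ Δ, α w ≤ α u}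

theorem lowestFace_inter_fiber_subsingleton {V : Type*} [AddCommGroup V] [Module ℝ V]
    [TopologicalSpace V] [ContinuousSMul ℝ V] {Δ : Set (ℝ × V)} (hΔ : Prod.snd '' Δ ∈ 𝓝 0)
    (α : ℝ × V →ₗ[ℝ] ℝ) (hproper : lowestFace α Δ ≠ Δ) :
    {w ∈ lowestFace α Δ | w.2 = 0}.Subsingleton := by
  rintro ⟨a, _⟩ ⟨⟨ha, ha_min⟩, rfl : _ = 0⟩ ⟨b, _⟩ ⟨⟨hb, hb_min⟩, rfl : _ = 0⟩
  by_contra hab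
  have hinl : α ∘ₗ inl ℝ ℝ V = 0 :=
    eq_zero_of_apply_eq_of_ne _ (fun h => hab (by rw [h]))
      (le_antisymm (ha_min _ hb) (hb_min _ ha))
  have hinr : α ∘ₗ inr ℝ ℝ V = 0 := by
    refine eq_zero_of_nonneg_of_mem_nhds _ hΔ ?_
    rintro _ ⟨p, hp, rfl⟩
    have hp_split : α p = α (inl ℝ ℝ V p.1) + α (inr ℝ ℝ V p.2) := by rw [← map_add]; simp
    have hinl_apply (t : ℝ) : α (inl ℝ ℝ V t) = 0 := congr($hinl t)
    calc (0 : ℝ) = α (a, 0) := (hinl_apply a).symm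
      _ ≤ α p := ha_min p hp
      _ = (α ∘ₗ inr ℝ ℝ V) p.2 := by rw [hp_split, hinl_apply, zero_add]; rfl
  obtain rfl : α = 0 := prod_ext (by rw [hinl, zero_comp]) (by rw [hinr, zero_comp])
  exact hproper (by simp [lowestFace])

/-- Remark 4.6 (r:transversalF): if `0` is interior to the Newton polytope, every proper face of
the augmented Newton polytope meets the fiber `ℝ × {0}` in at most one point. -/
theorem stmt_2 (r n : ℕ) (v : Fin n → (Fin r → ℝ)) (c : Fin n → ℝ)
    (h0 : (0 : Fin r → ℝ) ∈ interior (convexHull ℝ (Set.range v)))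
    (α : (ℝ × (Fin r → ℝ)) →ₗ[ℝ] ℝ)
    (F : Set (ℝ × (Fin r → ℝ)))
    (hF : F = {w ∈ convexHull ℝ (Set.range (fun i => ((c i, v i) : ℝ × (Fin r → ℝ)))) |
      ∀ u ∈ convexHull ℝ (Set.range (fun i => ((c i, v i) : ℝ × (Fin r → ℝ)))), α w ≤ α u})
    (hproper : F ≠ convexHull ℝ (Set.range (fun i => ((c i, v i) : ℝ × (Fin r → ℝ))))) :
    Set.Subsingleton {w ∈ F | w.2 = 0} := by
  subst hF
  have hsnd : Prod.snd '' convexHull ℝ (Set.range fun i => ((c i, v i) : ℝ × (Fin r → ℝ))) =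
      convexHull ℝ (Set.range v) := by
    rw [← coe_snd (R := ℝ), image_convexHull, ← Set.range_comp]
    rfl
  exact lowestFace_inter_fiber_subsingleton (hsnd ▸ mem_interior_iff_mem_nhds.mp h0) α hproper
end

section
/- Let f : ℝ^m → ℝ be given by f(ρ) = Σ_{i=1}^k c_i · exp(⟨ν_i, ρ⟩), where c_i > 0 and ν_i ∈ ℝ^m. If the convex hull of {ν_1,...,ν_k} is full-dimensional and contains 0 in its interior, then f has a unique critical point, which is a global minimum. -/
/-!
Write `ℓ i x = ⟨ν i, x⟩`. Since a ball around `0` lies in the convex hull of the `ν i`, every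
linear form `φ` satisfies `r ‖φ‖ ≤ max_i φ (ν i)`; hence `max_i ℓ i x ≥ r ‖x‖`, so `f` grows
exponentially at infinity and attains a minimum, which is a critical point. Critical points are
unique because the gradient is strictly monotone:
`(f' x - f' y) (x - y) = ∑ i, c i (ℓ i x - ℓ i y) (exp (ℓ i x) - exp (ℓ i y)) > 0` for `x ≠ y`.
-/

open Real Filter Set Topology

theorem exists_mul_norm_le_apply_of_zero_mem_interior_convexHull {ι E : Type*} [Finite ι]
    [NormedAddCommGroup E] [NormedSpace ℝ E] {ν : ι → E}
    (h0 : 0 ∈ interior (convexHull ℝ (range ν))) :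
    ∃ r > 0, ∀ φ : StrongDual ℝ E, ∃ i, r * ‖φ‖ ≤ φ (ν i) := by
  obtain ⟨r, hr, hball⟩ := Metric.mem_nhds_iff.1 (mem_interior_iff_mem_nhds.1 h0)
  have : Nonempty ι := by
    by_contra h
    rw [not_nonempty_iff, ← range_eq_empty_iff] at h
    rw [h, convexHull_empty, interior_empty] at h0
    exact h0
  refine ⟨r / 2, half_pos hr, fun φ => ?_⟩
  obtain ⟨i, hi⟩ := Finite.exists_max (φ ∘ ν)
  have hhull : ∀ z ∈ convexHull ℝ (range ν), φ z ≤ φ (ν i) := fun z hz => by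
    obtain ⟨-, ⟨j, rfl⟩, hj⟩ :=
      (φ : E →ₗ[ℝ] ℝ).convexOn convex_univ |>.exists_ge_of_mem_convexHull (subset_univ _) hz
    exact hj.trans (hi j)
  have hbound : ‖φ‖ ≤ φ (ν i) / (r / 2) := by
    refine φ.opNorm_bound_of_ball_bound (half_pos hr) _ fun z hz => ?_
    have hz' : ∀ w, ‖w‖ = ‖z‖ → w ∈ convexHull ℝ (range ν) := fun w hw =>
      hball <| by
        rw [Metric.mem_closedBall, dist_zero_right] at hz
        rw [Metric.mem_ball, dist_zero_right]
        linarith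
    rw [Real.norm_eq_abs, abs_le]
    constructor
    · linarith [map_neg φ z ▸ hhull (-z) (hz' _ (norm_neg z))]
    · exact hhull z (hz' z rfl)
  exact ⟨i, by rwa [le_div_iff₀' (half_pos hr)] at hbound⟩

noncomputable def dotProductCLM {n : Type*} [Fintype n] (v : n → ℝ) : StrongDual ℝ (n → ℝ) :=
  LinearMap.toContinuousLinearMap (dotProductBilin ℝ ℝ v)

theorem dotProductCLM_apply {n : Type*} [Fintype n] (v w : n → ℝ) :
    dotProductCLM v w = v ⬝ᵥ w :=
  rfl

theorem norm_le_norm_dotProductCLM {n : Type*} [Fintype n] (v : n → ℝ) :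
    ‖v‖ ≤ ‖dotProductCLM v‖ := by
  classical
  refine pi_norm_le_iff_of_nonneg (norm_nonneg _) |>.2 fun j => ?_
  calc ‖v j‖ = ‖dotProductCLM v (Pi.single j 1)‖ := by simp [dotProductCLM_apply]
    _ ≤ ‖dotProductCLM v‖ * ‖(Pi.single j 1 : n → ℝ)‖ := (dotProductCLM v).le_opNorm _
    _ = ‖dotProductCLM v‖ := by simp [Pi.norm_single]

theorem sub_mul_exp_sub_exp_pos {a b : ℝ} (h : a ≠ b) : 0 < (a - b) * (exp a - exp b) := by
  rcases h.lt_or_gt with h | h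
  · exact mul_pos_of_neg_of_neg (sub_neg.2 h) (sub_neg.2 (exp_lt_exp.2 h))
  · exact mul_pos (sub_pos.2 h) (sub_pos.2 (exp_lt_exp.2 h))

theorem sub_mul_exp_sub_exp_nonneg (a b : ℝ) : 0 ≤ (a - b) * (exp a - exp b) := by
  rcases eq_or_ne a b with rfl | h
  · simp
  · exact (sub_mul_exp_sub_exp_pos h).le

section ExpSum

variable {ι E : Type*} [Fintype ι] [NormedAddCommGroup E] [NormedSpace ℝ E]
  (c : ι → ℝ) (ℓ : ι → StrongDual ℝ E)

theorem hasFDerivAt_sum_mul_exp (x : E) :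
    HasFDerivAt (fun x => ∑ i, c i * exp (ℓ i x)) (∑ i, (c i * exp (ℓ i x)) • ℓ i) x :=
  HasFDerivAt.fun_sum fun i _ => by
    simpa only [smul_smul] using ((ℓ i).hasFDerivAt.exp).const_mul (c i)

theorem fderiv_sum_mul_exp_sub_apply (x y : E) :
    (fderiv ℝ (fun x => ∑ i, c i * exp (ℓ i x)) x - fderiv ℝ (fun x => ∑ i, c i * exp (ℓ i x)) y)
      (x - y) = ∑ i, c i * ((ℓ i x - ℓ i y) * (exp (ℓ i x) - exp (ℓ i y))) := by
  rw [(hasFDerivAt_sum_mul_exp c ℓ x).fderiv, (hasFDerivAt_sum_mul_exp c ℓ y).fderiv,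
    ← Finset.sum_sub_distrib]
  simp only [sum_apply, sub_apply, smul_apply, smul_eq_mul]
  exact Finset.sum_congr rfl fun i _ => by rw [map_sub]; ring

variable {c ℓ}

theorem eq_of_fderiv_sum_mul_exp_eq_zero (hc : ∀ i, 0 < c i) (hℓ : ∀ v ≠ 0, ∃ i, ℓ i v ≠ 0)
    {x y : E} (hx : fderiv ℝ (fun x => ∑ i, c i * exp (ℓ i x)) x = 0)
    (hy : fderiv ℝ (fun x => ∑ i, c i * exp (ℓ i x)) y = 0) : x = y := by
  by_contra hne
  obtain ⟨i, hi⟩ := hℓ (x - y) (sub_ne_zero.2 hne)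
  have hpos : 0 < ∑ i, c i * ((ℓ i x - ℓ i y) * (exp (ℓ i x) - exp (ℓ i y))) :=
    Finset.sum_pos' (fun j _ => mul_nonneg (hc j).le (sub_mul_exp_sub_exp_nonneg _ _))
      ⟨i, Finset.mem_univ i,
        mul_pos (hc i) (sub_mul_exp_sub_exp_pos (by rwa [map_sub, sub_ne_zero] at hi))⟩
  rw [← fderiv_sum_mul_exp_sub_apply, hx, hy, sub_zero, zero_apply] at hpos
  exact lt_irrefl 0 hpos

theorem tendsto_sum_mul_exp_cocompact [ProperSpace E] (hc : ∀ i, 0 < c i) {δ : ℝ} (hδ : 0 < δ)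
    (hℓ : ∀ x, ∃ i, δ * ‖x‖ ≤ ℓ i x) :
    Tendsto (fun x => ∑ i, c i * exp (ℓ i x)) (cocompact E) atTop := by
  have : Nonempty ι := ⟨(hℓ 0).choose⟩
  set m := Finset.univ.inf' Finset.univ_nonempty c
  have hm : 0 < m := (Finset.lt_inf'_iff _).2 fun i _ => hc i
  refine tendsto_atTop_mono (fun x => ?_) <| Tendsto.const_mul_atTop hm <|
    tendsto_exp_atTop.comp (tendsto_norm_cocompact_atTop.const_mul_atTop hδ)
  obtain ⟨i, hi⟩ := hℓ x
  calc m * exp (δ * ‖x‖) ≤ c i * exp (ℓ i x) :=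
        mul_le_mul (Finset.inf'_le _ (Finset.mem_univ i)) (exp_le_exp.2 hi) (exp_pos _).le
          (hc i).le
    _ ≤ ∑ i, c i * exp (ℓ i x) :=
        Finset.single_le_sum (f := fun j => c j * exp (ℓ j x))
          (fun j _ => (mul_pos (hc j) (exp_pos _)).le) (Finset.mem_univ i)

theorem exists_unique_critical_point_sum_mul_exp [ProperSpace E] (hc : ∀ i, 0 < c i) {δ : ℝ}
    (hδ : 0 < δ) (hℓ : ∀ x, ∃ i, δ * ‖x‖ ≤ ℓ i x) :
    ∃ ρ, fderiv ℝ (fun x => ∑ i, c i * exp (ℓ i x)) ρ = 0 ∧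
      (∀ σ, ∑ i, c i * exp (ℓ i ρ) ≤ ∑ i, c i * exp (ℓ i σ)) ∧
      ∀ ρ', fderiv ℝ (fun x => ∑ i, c i * exp (ℓ i x)) ρ' = 0 → ρ' = ρ := by
  have hinj : ∀ v ≠ 0, ∃ i, ℓ i v ≠ 0 := fun v hv => by
    obtain ⟨i, hi⟩ := hℓ v
    exact ⟨i, (lt_of_lt_of_le (mul_pos hδ (norm_pos_iff.2 hv)) hi).ne'⟩
  obtain ⟨ρ, hρ⟩ := (by fun_prop : Continuous fun x => ∑ i, c i * exp (ℓ i x)).exists_forall_le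
    (tendsto_sum_mul_exp_cocompact hc hδ hℓ)
  have hcrit : fderiv ℝ (fun x => ∑ i, c i * exp (ℓ i x)) ρ = 0 :=
    IsLocalMin.fderiv_eq_zero (Eventually.of_forall hρ)
  exact ⟨ρ, hcrit, hρ, fun ρ' hρ' => eq_of_fderiv_sum_mul_exp_eq_zero hc hinj hρ' hcrit⟩

end ExpSum

/-- Galkin's lemma: a positive combination of exponentials whose exponent polytope has `0` in its
interior has a unique critical point, which is a global minimum. -/
theorem stmt_3 (m k : ℕ) (c : Fin k → ℝ) (hc : ∀ i, 0 < c i) (ν : Fin k → (Fin m → ℝ))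
    (h0 : (0 : Fin m → ℝ) ∈ interior (convexHull ℝ (Set.range ν))) :
    ∃ ρ : Fin m → ℝ,
      fderiv ℝ (fun x : Fin m → ℝ => ∑ i, c i * Real.exp (∑ j, ν i j * x j)) ρ = 0 ∧
      (∀ σ : Fin m → ℝ,
        (∑ i, c i * Real.exp (∑ j, ν i j * ρ j)) ≤ ∑ i, c i * Real.exp (∑ j, ν i j * σ j)) ∧
      (∀ ρ' : Fin m → ℝ,
        fderiv ℝ (fun x : Fin m → ℝ => ∑ i, c i * Real.exp (∑ j, ν i j * x j)) ρ' = 0 →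
          ρ' = ρ) := by
  obtain ⟨r, hr, hν⟩ := exists_mul_norm_le_apply_of_zero_mem_interior_convexHull h0
  have hcoercive : ∀ x, ∃ i, r * ‖x‖ ≤ dotProductCLM (ν i) x := fun x => by
    obtain ⟨i, hi⟩ := hν (dotProductCLM x)
    refine ⟨i, ?_⟩
    rw [dotProductCLM_apply, dotProduct_comm, ← dotProductCLM_apply]
    exact (mul_le_mul_of_nonneg_left (norm_le_norm_dotProductCLM x) hr.le).trans hi
  exact exists_unique_critical_point_sum_mul_exp hc hr hcoercive
end

section
/- Let W(x) = Σ_{i=1}^n γ_i x^{v_i} be a Laurent polynomial on (ℝ_{>0})^r with coefficients γ_i > 0 and exponents v_i ∈ ℤ^r. If the convex hull of {v_i} has full dimension r and W has a critical point p ∈ (ℝ_{>0})^r, then 0 lies in the interior of convexHull {v_i}. -/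
/-! If `0` were not interior to the Newton polytope `P = conv {vᵢ}`, the supporting hyperplane
theorem (`P` has nonempty interior because it is full-dimensional) would give a direction `u`
with `⟨vᵢ, u⟩ ≤ 0` for all `i` and, again by full-dimensionality, `⟨vᵢ, u⟩ < 0` for some `i`.
Then `∂_u W(p) = ∑ γᵢ p^{vᵢ} ⟨vᵢ, u⟩` is a sum of nonpositive terms, one of them negative, so
`p` is not a critical point. -/

open Finset

theorem exists_dual_nonpos_and_neg_of_zero_notMem_interior_convexHull {E : Type*}
    [NormedAddCommGroup E] [NormedSpace ℝ E] [FiniteDimensional ℝ E] {s : Set E}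
    (hs : affineSpan ℝ s = ⊤) (h0 : (0 : E) ∉ interior (convexHull ℝ s)) :
    ∃ f : StrongDual ℝ E, (∀ x ∈ s, f x ≤ 0) ∧ ∃ x ∈ s, f x < 0 := by
  have hint : (interior (convexHull ℝ s)).Nonempty := by
    rwa [(convex_convexHull ℝ s).interior_nonempty_iff_affineSpan_eq_top, affineSpan_convexHull]
  obtain ⟨f, hf0, hf⟩ :=
    geometric_hahn_banach_of_nonempty_interior_point (convex_convexHull ℝ s) h0 hint
  have hle : ∀ x ∈ s, f x ≤ 0 := fun x hx => by
    simpa using hf x (subset_convexHull ℝ s hx)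
  refine ⟨f, hle, ?_⟩
  by_contra! hge
  have hker : affineSpan ℝ s ≤ (LinearMap.ker (f : E →ₗ[ℝ] ℝ)).toAffineSubspace :=
    affineSpan_le.mpr fun x hx => le_antisymm (hle x hx) (hge x hx)
  rw [hs] at hker
  exact hf0 (ContinuousLinearMap.ext fun x => hker (AffineSubspace.mem_top ℝ E x))

/-- Lemma 7.3 (l:contra1) over ℝ: a positive Laurent polynomial with full-dimensional Newton
polytope that has a positive critical point must have `0` in the interior of its Newton polytope. -/
theorem stmt_5 (r n : ℕ) (γ : Fin n → ℝ) (hγ : ∀ i, 0 < γ i) (v : Fin n → (Fin r → ℤ))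
    (hfull : affineSpan ℝ (Set.range (fun i => fun j => (v i j : ℝ))) = ⊤)
    (p : Fin r → ℝ) (hp : ∀ j, 0 < p j)
    (hcrit : ∀ u : Fin r → ℝ,
      ∑ i, γ i * (∏ j, p j ^ (v i j)) * (∑ j, (v i j : ℝ) * u j) = 0) :
    (0 : Fin r → ℝ) ∈ interior (convexHull ℝ (Set.range (fun i => fun j => (v i j : ℝ)))) := by
  by_contra h0
  obtain ⟨f, hle, _, ⟨i₀, rfl⟩, hlt⟩ :=
    exists_dual_nonpos_and_neg_of_zero_notMem_interior_convexHull hfull h0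
  set u : Fin r → ℝ := fun j => f fun k => if j = k then 1 else 0
  have hdot (i : Fin n) : ∑ j, (v i j : ℝ) * u j = f fun j => (v i j : ℝ) := by
    simpa [smul_eq_mul] using ((f : (Fin r → ℝ) →ₗ[ℝ] ℝ).pi_apply_eq_sum_univ _).symm
  have hweight (i : Fin n) : 0 < γ i * ∏ j, p j ^ (v i j) :=
    mul_pos (hγ i) (prod_pos fun j _ => zpow_pos (hp j) _)
  have hneg : ∑ i, γ i * (∏ j, p j ^ (v i j)) * (∑ j, (v i j : ℝ) * u j) < 0 := by
    rw [← sum_const_zero]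
    refine sum_lt_sum (fun i _ => ?_) ⟨i₀, mem_univ _, ?_⟩
    · exact mul_nonpos_of_nonneg_of_nonpos (hweight i).le (hdot i ▸ hle _ ⟨i, rfl⟩)
    · exact mul_neg_of_pos_of_neg (hweight i₀) (hdot i₀ ▸ hlt)
  exact hneg.ne (hcrit u)
end

section
/- Let W(x) = Σ_{i=1}^n γ_i x^{v_i} with γ_i > 0 and v_i ∈ ℤ^r. Then W has a unique critical point in (ℝ_{>0})^r if and only if the convex hull of {v_1,...,v_n} is full-dimensional in ℝ^r and contains 0 in its interior. -/
/-!
In logarithmic coordinates `p = exp t` the Laurent polynomial becomes `F t = ∑ γᵢ exp ⟨vᵢ, t⟩`,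
whose critical points are those of `W` on the positive orthant.

If `0` lies in the interior of the Newton polytope, then `maxᵢ ⟨vᵢ, t⟩ ≥ c ‖t‖` for some `c > 0`.
Hence `F` is coercive and attains a minimum, which is critical; and for two critical points `s, t`
the sum `∑ γᵢ (exp ⟨vᵢ, t⟩ - exp ⟨vᵢ, s⟩) ⟨vᵢ, t - s⟩` vanishes although every term is
nonnegative, so `⟨vᵢ, t - s⟩ = 0` for all `i`, which forces `t = s`.

Conversely, if `0` is not interior, a supporting hyperplane gives `u ≠ 0` with `⟨vᵢ, u⟩ ≥ 0` for
all `i`. Testing a critical point against `u` shows that all `⟨vᵢ, u⟩` vanish, so `t + u` is a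
second critical point.
-/

open Set Filter Topology Real

theorem exists_dual_ne_zero_nonneg_of_zero_notMem_interior_convexHull {E : Type*}
    [NormedAddCommGroup E] [NormedSpace ℝ E] [FiniteDimensional ℝ E] {s : Set E}
    (hs : s.Nonempty) (h0 : (0 : E) ∉ interior (convexHull ℝ s)) :
    ∃ f : Module.Dual ℝ E, f ≠ 0 ∧ ∀ x ∈ s, 0 ≤ f x := by
  by_cases hint : (interior (convexHull ℝ s)).Nonempty
  · obtain ⟨f, c, hf0, hfs, hc⟩ := geometric_hahn_banach_of_nonempty_interior
      (convex_convexHull ℝ s) (convex_singleton 0) (disjoint_singleton_right.2 h0) hint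
      (singleton_nonempty 0)
    refine ⟨-f.toLinearMap, by simpa using ContinuousLinearMap.coe_injective.ne hf0, fun x hx => ?_⟩
    have hfx := hfs x (subset_convexHull ℝ s hx)
    have hc0 : c ≤ 0 := by simpa using hc 0 rfl
    simp only [LinearMap.neg_apply, ContinuousLinearMap.coe_coe]
    linarith
  · obtain ⟨x₀, hx₀⟩ := hs
    have hspan : vectorSpan ℝ s < ⊤ := by
      rw [lt_top_iff_ne_top, ← direction_affineSpan, Ne,
        AffineSubspace.direction_eq_top_iff_of_nonempty ((affineSpan_nonempty ℝ).2 ⟨x₀, hx₀⟩),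
        ← interior_convexHull_nonempty_iff_affineSpan_eq_top]
      exact hint
    obtain ⟨f, hf0, hker⟩ := (vectorSpan ℝ s).exists_le_ker_of_lt_top hspan
    have hconst : ∀ x ∈ s, f x = f x₀ := fun x hx => by
      have := hker (vsub_mem_vectorSpan ℝ hx hx₀)
      rwa [LinearMap.mem_ker, vsub_eq_sub, map_sub, sub_eq_zero] at this
    rcases le_total 0 (f x₀) with hpos | hneg
    · exact ⟨f, hf0, fun x hx => (hconst x hx).symm ▸ hpos⟩
    · exact ⟨-f, neg_ne_zero.2 hf0, fun x hx => by simp [hconst x hx, hneg]⟩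

theorem exists_dotProduct_le_of_mem_convexHull {ι κ : Type*} [Fintype κ] {V : ι → κ → ℝ}
    {x : κ → ℝ} (hx : x ∈ convexHull ℝ (range V)) (t : κ → ℝ) : ∃ i, x ⬝ᵥ t ≤ V i ⬝ᵥ t := by
  classical
  obtain ⟨_, ⟨i, rfl⟩, hi⟩ :=
    ((dotProductEquiv ℝ κ t).convexOn convex_univ).exists_ge_of_mem_convexHull (subset_univ _) hx
  exact ⟨i, by simpa [dotProduct_comm] using hi⟩

theorem exists_pos_mul_norm_le_dotProduct {ι κ : Type*} [Fintype κ] {V : ι → κ → ℝ}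
    (h0 : (0 : κ → ℝ) ∈ interior (convexHull ℝ (range V))) :
    ∃ c > 0, ∀ t : κ → ℝ, ∃ i, c * ‖t‖ ≤ V i ⬝ᵥ t := by
  obtain ⟨δ, hδ, hball⟩ := Metric.mem_nhds_iff.1 (mem_interior_iff_mem_nhds.1 h0)
  refine ⟨δ / 2, half_pos hδ, fun t => ?_⟩
  set x : κ → ℝ := fun j => δ / 2 * SignType.sign (t j)
  have hx : x ∈ Metric.ball 0 δ := by
    rw [mem_ball_zero_iff]
    refine lt_of_le_of_lt ((pi_norm_le_iff_of_nonneg (half_pos hδ).le).2 fun j => ?_)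
      (half_lt_self hδ)
    rcases lt_trichotomy (t j) 0 with h | h | h <;> simp [x, h, abs_of_pos hδ, (half_pos hδ).le]
  obtain ⟨i, hi⟩ := exists_dotProduct_le_of_mem_convexHull (hball hx) t
  refine ⟨i, le_trans ?_ hi⟩
  have hxt : x ⬝ᵥ t = δ / 2 * ∑ j, |t j| := by
    simp [x, dotProduct, Finset.mul_sum, mul_assoc, sign_mul_self]
  rw [hxt]
  gcongr
  exact (pi_norm_le_iff_of_nonneg (by positivity)).2 fun j =>
    Finset.single_le_sum (f := fun j => |t j|) (fun j _ => abs_nonneg _) (Finset.mem_univ j)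

theorem eq_zero_of_forall_dotProduct_eq_zero {ι κ : Type*} [Fintype κ] {V : ι → κ → ℝ}
    (h0 : (0 : κ → ℝ) ∈ interior (convexHull ℝ (range V))) {w : κ → ℝ}
    (hw : ∀ i, V i ⬝ᵥ w = 0) : w = 0 := by
  obtain ⟨c, hc, hV⟩ := exists_pos_mul_norm_le_dotProduct h0
  obtain ⟨i, hi⟩ := hV w
  rw [hw i] at hi
  exact norm_le_zero_iff.1 (nonpos_of_mul_nonpos_right hi hc)

theorem exists_ne_zero_dotProduct_nonneg_of_zero_notMem_interior {ι κ : Type*} [Nonempty ι]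
    [Fintype κ] {V : ι → κ → ℝ} (h0 : (0 : κ → ℝ) ∉ interior (convexHull ℝ (range V))) :
    ∃ u ≠ 0, ∀ i, 0 ≤ V i ⬝ᵥ u := by
  classical
  obtain ⟨f, hf0, hf⟩ :=
    exists_dual_ne_zero_nonneg_of_zero_notMem_interior_convexHull (range_nonempty V) h0
  obtain ⟨u, rfl⟩ := (dotProductEquiv ℝ κ).surjective f
  refine ⟨u, by simpa using hf0, fun i => ?_⟩
  simpa [dotProduct_comm] using hf (V i) (mem_range_self i)

theorem StrictMono.sub_mul_sub_pos {R : Type*} [Ring R] [LinearOrder R] [IsStrictOrderedRing R]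
    {f : R → R} (hf : StrictMono f) {a b : R} (h : a ≠ b) : 0 < (f a - f b) * (a - b) := by
  rcases h.lt_or_gt with h | h
  · exact mul_pos_of_neg_of_neg (sub_neg.2 (hf h)) (sub_neg.2 h)
  · exact mul_pos (sub_pos.2 (hf h)) (sub_pos.2 h)

theorem prod_exp_zpow {κ : Type*} [Fintype κ] (t : κ → ℝ) (m : κ → ℤ) :
    ∏ j, exp (t j) ^ m j = exp ((fun j => (m j : ℝ)) ⬝ᵥ t) := by
  simp only [dotProduct, exp_sum, mul_comm (m _ : ℝ), exp_mul, rpow_intCast]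

theorem existsUnique_pos_iff_existsUnique_exp {κ : Type*} (Q : (κ → ℝ) → Prop) :
    (∃! p : κ → ℝ, (∀ j, 0 < p j) ∧ Q p) ↔ ∃! t : κ → ℝ, Q (fun j => exp (t j)) := by
  have hlog : ∀ p : κ → ℝ, (∀ j, 0 < p j) → (fun j => exp (log (p j))) = p :=
    fun p hp => funext fun j => exp_log (hp j)
  constructor
  · rintro ⟨p, ⟨hp, hQ⟩, huniq⟩
    refine ⟨fun j => log (p j), ?_, fun t ht => ?_⟩
    · beta_reduce
      rwa [hlog p hp]
    simp [← huniq _ ⟨fun j => exp_pos _, ht⟩]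
  · rintro ⟨t, ht, huniq⟩
    refine ⟨_, ⟨fun j => exp_pos (t j), ht⟩, fun p ⟨hp, hQ⟩ => ?_⟩
    have hpt : (fun j => log (p j)) = t := huniq _ (by beta_reduce; rwa [hlog p hp])
    subst hpt
    exact (hlog p hp).symm

section ExpSum

variable {ι κ : Type*} [Fintype ι] [Fintype κ]

noncomputable def expSum (γ : ι → ℝ) (V : ι → κ → ℝ) (t : κ → ℝ) : ℝ :=
  ∑ i, γ i * exp (V i ⬝ᵥ t)

def IsExpSumCritical (γ : ι → ℝ) (V : ι → κ → ℝ) (t : κ → ℝ) : Prop :=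
  ∀ u, ∑ i, γ i * exp (V i ⬝ᵥ t) * (V i ⬝ᵥ u) = 0

variable {γ : ι → ℝ} {V : ι → κ → ℝ}

theorem continuous_expSum : Continuous (expSum γ V) := by
  unfold expSum dotProduct
  fun_prop

theorem tendsto_expSum_cocompact (hγ : ∀ i, 0 < γ i)
    (h0 : (0 : κ → ℝ) ∈ interior (convexHull ℝ (range V))) :
    Tendsto (expSum γ V) (cocompact _) atTop := by
  obtain ⟨c, hc, hV⟩ := exists_pos_mul_norm_le_dotProduct h0
  have : Nonempty ι := ⟨(hV 0).choose⟩
  obtain ⟨i₀, hi₀⟩ := Finite.exists_min γ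
  have hlow : ∀ t, γ i₀ * exp (c * ‖t‖) ≤ expSum γ V t := fun t => by
    obtain ⟨i, hi⟩ := hV t
    calc γ i₀ * exp (c * ‖t‖) ≤ γ i * exp (V i ⬝ᵥ t) :=
          mul_le_mul (hi₀ i) (exp_le_exp.2 hi) (exp_pos _).le (hγ i).le
      _ ≤ expSum γ V t :=
          Finset.single_le_sum (f := fun i => γ i * exp (V i ⬝ᵥ t))
            (fun i _ => (mul_pos (hγ i) (exp_pos _)).le) (Finset.mem_univ i)
  refine tendsto_atTop_mono hlow ?_
  exact (tendsto_exp_atTop.comp (tendsto_norm_cocompact_atTop.const_mul_atTop hc)).const_mul_atTop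
    (hγ i₀)

theorem hasDerivAt_expSum_add_smul (t u : κ → ℝ) :
    HasDerivAt (fun s : ℝ => expSum γ V (t + s • u))
      (∑ i, γ i * exp (V i ⬝ᵥ t) * (V i ⬝ᵥ u)) 0 := by
  have hline : ∀ i, HasDerivAt (fun s : ℝ => V i ⬝ᵥ (t + s • u)) (V i ⬝ᵥ u) 0 := fun i => by
    simp only [dotProduct_add, dotProduct_smul, smul_eq_mul]
    simpa using ((hasDerivAt_id (0 : ℝ)).mul_const (V i ⬝ᵥ u)).const_add (V i ⬝ᵥ t)
  simpa [expSum, mul_assoc] using HasDerivAt.fun_sum fun i _ => ((hline i).exp).const_mul (γ i)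

theorem isExpSumCritical_of_forall_le {t : κ → ℝ} (h : ∀ s, expSum γ V t ≤ expSum γ V s) :
    IsExpSumCritical γ V t := fun u => by
  have hmin : IsLocalMin (fun s : ℝ => expSum γ V (t + s • u)) 0 :=
    Eventually.of_forall fun s => by simpa using h (t + s • u)
  exact hmin.hasDerivAt_eq_zero (hasDerivAt_expSum_add_smul t u)

theorem exists_isExpSumCritical (hγ : ∀ i, 0 < γ i)
    (h0 : (0 : κ → ℝ) ∈ interior (convexHull ℝ (range V))) : ∃ t, IsExpSumCritical γ V t :=
  let ⟨t, ht⟩ := continuous_expSum.exists_forall_le (tendsto_expSum_cocompact hγ h0)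
  ⟨t, isExpSumCritical_of_forall_le ht⟩

theorem IsExpSumCritical.dotProduct_sub_eq_zero (hγ : ∀ i, 0 < γ i) {s t : κ → ℝ}
    (hs : IsExpSumCritical γ V s) (ht : IsExpSumCritical γ V t) (i : ι) :
    V i ⬝ᵥ (t - s) = 0 := by
  set d : ι → ℝ := fun i => γ i * ((exp (V i ⬝ᵥ t) - exp (V i ⬝ᵥ s)) * (V i ⬝ᵥ t - V i ⬝ᵥ s))
  have hd : ∑ i, d i = 0 := by
    have := congrArg₂ (· - ·) (ht (t - s)) (hs (t - s))
    simp only [sub_zero, ← Finset.sum_sub_distrib] at this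
    rw [← this]
    exact Finset.sum_congr rfl fun i _ => by simp only [d, dotProduct_sub]; ring
  have hd_nonneg : ∀ j, 0 ≤ d j := fun j => by
    rcases eq_or_ne (V j ⬝ᵥ t) (V j ⬝ᵥ s) with h | h
    · simp [d, h]
    · exact (mul_pos (hγ j) (exp_strictMono.sub_mul_sub_pos h)).le
  by_contra hne
  rw [dotProduct_sub, sub_eq_zero] at hne
  have : 0 < ∑ i, d i := Finset.sum_pos' (fun j _ => hd_nonneg j)
    ⟨i, Finset.mem_univ i, mul_pos (hγ i) (exp_strictMono.sub_mul_sub_pos hne)⟩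
  exact this.ne' hd

theorem IsExpSumCritical.dotProduct_eq_zero (hγ : ∀ i, 0 < γ i) {t u : κ → ℝ}
    (ht : IsExpSumCritical γ V t) (hu : ∀ i, 0 ≤ V i ⬝ᵥ u) (i : ι) : V i ⬝ᵥ u = 0 := by
  have hpos : ∀ j, 0 < γ j * exp (V j ⬝ᵥ t) := fun j => mul_pos (hγ j) (exp_pos _)
  have := (Finset.sum_eq_zero_iff_of_nonneg fun j _ => mul_nonneg (hpos j).le (hu j)).1 (ht u) i
    (Finset.mem_univ i)
  exact (mul_eq_zero.1 this).resolve_left (hpos i).ne'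

theorem IsExpSumCritical.add {t u : κ → ℝ} (ht : IsExpSumCritical γ V t)
    (hu : ∀ i, V i ⬝ᵥ u = 0) : IsExpSumCritical γ V (t + u) := by
  simpa [IsExpSumCritical, dotProduct_add, hu] using ht

theorem existsUnique_isExpSumCritical_iff [Nonempty ι] (hγ : ∀ i, 0 < γ i) :
    (∃! t, IsExpSumCritical γ V t) ↔ (0 : κ → ℝ) ∈ interior (convexHull ℝ (range V)) := by
  constructor
  · rintro ⟨t, ht, huniq⟩
    by_contra h0
    obtain ⟨u, hu0, hu⟩ := exists_ne_zero_dotProduct_nonneg_of_zero_notMem_interior h0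
    exact hu0 (add_eq_left.1 (huniq _ (ht.add (ht.dotProduct_eq_zero hγ hu))))
  · intro h0
    obtain ⟨t, ht⟩ := exists_isExpSumCritical hγ h0
    exact ⟨t, ht, fun s hs =>
      sub_eq_zero.1 (eq_zero_of_forall_dotProduct_eq_zero h0 (ht.dotProduct_sub_eq_zero hγ hs))⟩

end ExpSum

/-- Corollary 7.5 (c:converse): a positive Laurent polynomial over ℝ has a unique positive
critical point iff its Newton polytope is full-dimensional with `0` in its interior. -/
theorem stmt_7 (r n : ℕ) (hn : 0 < n) (γ : Fin n → ℝ) (hγ : ∀ i, 0 < γ i)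
    (v : Fin n → (Fin r → ℤ)) :
    (∃! p : Fin r → ℝ, (∀ j, 0 < p j) ∧
        ∀ u : Fin r → ℝ,
          ∑ i, γ i * (∏ j, p j ^ (v i j)) * (∑ j, (v i j : ℝ) * u j) = 0) ↔
      (affineSpan ℝ (Set.range (fun i => fun j => (v i j : ℝ))) = ⊤ ∧
        (0 : Fin r → ℝ) ∈
          interior (convexHull ℝ (Set.range (fun i => fun j => (v i j : ℝ))))) := by
  have : Nonempty (Fin n) := ⟨⟨0, hn⟩⟩
  rw [existsUnique_pos_iff_existsUnique_exp]
  simp only [prod_exp_zpow]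
  refine (existsUnique_isExpSumCritical_iff (V := fun i j => (v i j : ℝ)) hγ).trans
    (and_iff_right_of_imp fun h0 => ?_).symm
  exact interior_convexHull_nonempty_iff_affineSpan_eq_top.1 ⟨0, h0⟩
end

section
/- Let v_1,...,v_n ∈ ℝ^r with 0 in the interior of their convex hull, and let δ_1,...,δ_n, δ'_1,...,δ'_n ∈ ℝ_{≥0} satisfy: (a) for each i, δ'_i − δ_i = ⟨v_i, e⟩ for a fixed vector e ∈ ℝ^r; (b) both families (δ_i) and (δ'_i) satisfy the tropical critical conditions, namely for every ε ≥ 0, the relative interior of convexHull {v_i : δ_i = ε} meets span {v_i : δ_i < ε}, and similarly for (δ'_i). Then δ_i = δ'_i for all i, and consequently e = 0. -/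
/-- The tropical critical conditions for exponents `v` and level values `δ`: for every `ε ≥ 0`
the relative interior of the convex hull of `{v i : δ i = ε}` (by convention `{0}` if this set is
empty) meets the span of `{v i : δ i < ε}`. -/
def TropCritCond {r n : ℕ} (v : Fin n → (Fin r → ℝ)) (δ : Fin n → ℝ) : Prop :=
  ∀ ε : ℝ, 0 ≤ ε → ∃ x : Fin r → ℝ,
    x ∈ Submodule.span ℝ {w : Fin r → ℝ | ∃ i, δ i < ε ∧ w = v i} ∧
    (((∀ i, δ i ≠ ε) ∧ x = 0) ∨
      ∃ w : Fin n → ℝ, (∀ i, (δ i = ε → 0 < w i) ∧ (δ i ≠ ε → w i = 0)) ∧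
        (∑ i, w i) = 1 ∧ (∑ i, w i • v i) = x)

/-!
Let `φ = ⟨·, e⟩`, so that `δ' i - δ i = φ (v i)`. If `φ` did not vanish on every `v i`, pick such
an `i₀` minimising `ε = min (δ i₀) (δ' i₀)`, and say `δ i₀ = ε` (otherwise swap the families and
replace `φ` by `-φ`). Below level `ε` `φ` vanishes on the `v i`, and at `δ`-level `ε` it is
nonnegative, since `φ (v i) < 0` would put `i` below level `ε` for `δ'`. The critical condition
at `ε` writes a point of the span of the lower `v i`, on which `φ` is zero, as a positive
combination of the `v i` at level `ε`; hence `φ` vanishes on these, contradicting the choice of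
`i₀`. Finally the `v i` span the whole space because `0` is interior to their convex hull, so
`φ = 0` and `e = 0`.
-/

open Matrix

theorem Submodule.span_eq_top_of_nonempty_interior_convexHull {E : Type*} [AddCommGroup E]
    [Module ℝ E] [TopologicalSpace E] [ContinuousAdd E] [ContinuousSMul ℝ E] {s : Set E}
    (hs : (interior (convexHull ℝ s)).Nonempty) : span ℝ s = ⊤ :=
  (span ℝ s).eq_top_of_nonempty_interior' <|
    hs.mono <| interior_mono <| convexHull_min subset_span (span ℝ s).convex

namespace TropCritCond

variable {r n : ℕ} {v : Fin n → (Fin r → ℝ)} {δ δ' : Fin n → ℝ} (φ : Module.Dual ℝ (Fin r → ℝ))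

theorem apply_eq_zero_of_nonneg (h : TropCritCond v δ) {ε : ℝ} (hε : 0 ≤ ε)
    (hlow : ∀ i, δ i < ε → φ (v i) = 0) (hnonneg : ∀ i, δ i = ε → 0 ≤ φ (v i))
    {i : Fin n} (hi : δ i = ε) : φ (v i) = 0 := by
  obtain ⟨x, hx, ⟨hnone, -⟩ | ⟨w, hw, -, rfl⟩⟩ := h ε hε
  · exact absurd hi (hnone i)
  have hspan : Submodule.span ℝ {w | ∃ i, δ i < ε ∧ w = v i} ≤ LinearMap.ker φ := by
    rw [Submodule.span_le]
    rintro _ ⟨j, hj, rfl⟩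
    exact hlow j hj
  have hsum : ∑ j, w j * φ (v j) = 0 := by
    simpa [map_sum] using hspan hx
  have hterm : ∀ j ∈ Finset.univ, 0 ≤ w j * φ (v j) := by
    intro j _
    by_cases hj : δ j = ε
    · exact mul_nonneg ((hw j).1 hj).le (hnonneg j hj)
    · simp [(hw j).2 hj]
  have := (Finset.sum_eq_zero_iff_of_nonneg hterm).mp hsum i (Finset.mem_univ i)
  exact (mul_eq_zero.mp this).resolve_left ((hw i).1 hi).ne'

theorem apply_eq_zero_of_sub_eq_of_level (h : TropCritCond v δ)
    (ha : ∀ i, δ' i - δ i = φ (v i)) {ε : ℝ} (hε : 0 ≤ ε)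
    (hlow : ∀ i, min (δ i) (δ' i) < ε → φ (v i) = 0) {i : Fin n} (hi : δ i = ε) :
    φ (v i) = 0 := by
  refine h.apply_eq_zero_of_nonneg φ hε (fun j hj ↦ hlow j (min_lt_of_left_lt hj)) ?_ hi
  intro j hj
  by_contra! hneg
  have hlt : min (δ j) (δ' j) < ε := min_lt_of_right_lt (by linarith [ha j])
  exact hneg.ne (hlow j hlt)

theorem apply_eq_zero_of_sub_eq (h : TropCritCond v δ) (h' : TropCritCond v δ')
    (hδ : ∀ i, 0 ≤ δ i) (hδ' : ∀ i, 0 ≤ δ' i) (ha : ∀ i, δ' i - δ i = φ (v i)) (i : Fin n) :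
    φ (v i) = 0 := by
  by_contra hi
  set B := Finset.univ.filter fun j ↦ φ (v j) ≠ 0
  obtain ⟨i₀, hi₀B, hmin⟩ :=
    B.exists_min_image (fun j ↦ min (δ j) (δ' j)) ⟨i, by simpa [B] using hi⟩
  set ε := min (δ i₀) (δ' i₀)
  have hε : 0 ≤ ε := le_min (hδ i₀) (hδ' i₀)
  have hlow : ∀ j, min (δ j) (δ' j) < ε → φ (v j) = 0 := by
    intro j hj
    by_contra hφj
    exact (hmin j (by simpa [B] using hφj)).not_gt hj
  have hi₀ : φ (v i₀) ≠ 0 := by simpa [B] using hi₀B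
  rcases min_choice (δ i₀) (δ' i₀) with hc | hc
  · exact hi₀ (h.apply_eq_zero_of_sub_eq_of_level φ ha hε hlow hc.symm)
  · have ha' : ∀ j, δ j - δ' j = (-φ) (v j) := fun j ↦ by simp [← ha j]
    have hlow' : ∀ j, min (δ' j) (δ j) < ε → (-φ) (v j) = 0 := fun j hj ↦ by
      simp [hlow j (by rwa [min_comm])]
    exact hi₀ (by simpa using h'.apply_eq_zero_of_sub_eq_of_level (-φ) ha' hε hlow' hc.symm)

end TropCritCond

/-- Core of Lemma 4.13 (l:uniqueness): two families of levels satisfying the tropical critical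
conditions and differing by `⟨v_i, e⟩` must coincide, and then `e = 0`. -/
theorem stmt_8 (r n : ℕ) (v : Fin n → (Fin r → ℝ))
    (h0 : (0 : Fin r → ℝ) ∈ interior (convexHull ℝ (Set.range v)))
    (δ δ' : Fin n → ℝ) (hδ : ∀ i, 0 ≤ δ i) (hδ' : ∀ i, 0 ≤ δ' i)
    (e : Fin r → ℝ) (ha : ∀ i, δ' i - δ i = ∑ j, v i j * e j)
    (h1 : TropCritCond v δ) (h2 : TropCritCond v δ') :
    (∀ i, δ i = δ' i) ∧ e = 0 := by
  set φ := dotProductEquiv ℝ (Fin r) e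
  have ha' : ∀ i, δ' i - δ i = φ (v i) := fun i ↦ by
    simp [φ, ha i, dotProduct, mul_comm]
  have hφv : ∀ i, φ (v i) = 0 := h1.apply_eq_zero_of_sub_eq φ h2 hδ hδ' ha'
  have hspan : Submodule.span ℝ (Set.range v) = ⊤ :=
    Submodule.span_eq_top_of_nonempty_interior_convexHull ⟨0, h0⟩
  have hφ : φ = 0 := by
    refine LinearMap.ext_on_range hspan fun i ↦ ?_
    simpa using hφv i
  refine ⟨fun i ↦ by linarith [ha' i, hφv i], ?_⟩
  simpa [φ] using congrArg (· e) hφ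
end

section
/- Let v_1,...,v_n ∈ ℝ^r span ℝ^r, let c_1,...,c_n > 0, and for ε ≥ 0 let δ_1,...,δ_n ∈ ℝ_{≥0} be given with B_{<ε} := span {v_i : δ_i < ε}. Suppose for every ε ≥ 0 that 0 lies in the relative interior of the convex hull of the images of {v_i : δ_i = ε} in the quotient ℝ^r / B_{<ε}. Then there exists a unique d ∈ ℝ^r such that for every ε ≥ 0, Σ_{i : δ_i = ε} c_i · exp(⟨v_i, d⟩) · v_i ∈ B_{<ε}. -/
/-!
Write `φ = ⟨·, d⟩`. The condition at level `ε` only involves `φ` on `B_{≤ε}`, and once `φ` is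
fixed on `B_{<ε}` it is Galkin's problem in `V ⧸ B_{<ε}`: find `χ` with
`∑ cᵢ e^{φ vᵢ} e^{χ [vᵢ]} [vᵢ] = 0`. Galkin's lemma is proved by minimising the convex function
`t ↦ ∑ cᵢ e^{tᵢ}` over the space of value vectors `t = (χ [vᵢ])ᵢ`; a positive relation
`∑ wᵢ [vᵢ] = 0` gives `∑ wᵢ tᵢ = 0`, which makes the sublevel sets bounded. Uniqueness comes from
`(e^b - e^a)(b - a) > 0` for `a ≠ b`. A solution is then built level by level, upwards, and two
solutions cannot differ first at any level.
-/

open Finset Real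

section Galkin

variable {ι : Type*} [Fintype ι]

lemma exp_sub_exp_mul_sub_nonneg (a b : ℝ) : 0 ≤ (exp b - exp a) * (b - a) := by
  rcases le_total a b with h | h
  · exact mul_nonneg (sub_nonneg.2 (exp_le_exp.2 h)) (sub_nonneg.2 h)
  · exact mul_nonneg_of_nonpos_of_nonpos (sub_nonpos.2 (exp_le_exp.2 h)) (sub_nonpos.2 h)

lemma eq_of_exp_sub_exp_mul_sub_eq_zero {a b : ℝ} (h : (exp b - exp a) * (b - a) = 0) :
    a = b := by
  rcases mul_eq_zero.1 h with h | h
  · exact (exp_injective (sub_eq_zero.1 h)).symm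
  · exact (sub_eq_zero.1 h).symm

lemma eq_of_sum_mul_exp_sub_exp_mul_sub_eq_zero {c a b : ι → ℝ} (hc : ∀ i, 0 < c i)
    (h : ∑ i, c i * ((exp (b i) - exp (a i)) * (b i - a i)) = 0) (i : ι) : a i = b i := by
  have hi := (sum_eq_zero_iff_of_nonneg fun j _ =>
    mul_nonneg (hc j).le (exp_sub_exp_mul_sub_nonneg (a j) (b j))).1 h i (mem_univ i)
  exact eq_of_exp_sub_exp_mul_sub_eq_zero ((mul_eq_zero.1 hi).resolve_left (hc i).ne')

lemma abs_le_two_mul_exp_sub (x : ℝ) : |x| ≤ 2 * exp x - x := by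
  have := add_one_le_exp x
  have := exp_pos x
  exact abs_le.2 ⟨by linarith, by linarith⟩

lemma mul_abs_le_of_sum_mul_eq_zero {w t : ι → ℝ} (hw : ∀ i, 0 ≤ w i)
    (h : ∑ j, w j * t j = 0) (i : ι) : w i * |t i| ≤ 2 * ∑ j, w j * exp (t j) :=
  calc w i * |t i| ≤ ∑ j, w j * |t j| :=
        single_le_sum (f := fun j => w j * |t j|)
          (fun j _ => mul_nonneg (hw j) (abs_nonneg _)) (mem_univ i)
    _ ≤ ∑ j, w j * (2 * exp (t j) - t j) :=
        sum_le_sum fun j _ => mul_le_mul_of_nonneg_left (abs_le_two_mul_exp_sub _) (hw j)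
    _ = 2 * ∑ j, w j * exp (t j) := by
        simp only [mul_sub, sum_sub_distrib, h, mul_sum]
        ring_nf

theorem exists_isMinOn_sum_mul_exp (R : Submodule ℝ (ι → ℝ)) {c w : ι → ℝ}
    (hc : ∀ i, 0 < c i) (hw : ∀ i, 0 < w i) (hR : ∀ t ∈ R, ∑ i, w i * t i = 0) :
    ∃ t ∈ R, IsMinOn (fun t : ι → ℝ => ∑ i, c i * exp (t i)) R t := by
  set G := fun t : ι → ℝ => ∑ i, c i * exp (t i)
  have hG : Continuous G := by fun_prop
  set C := fun i => 2 * (∑ j, w j * (G 0 / c j)) / w i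
  have hbox : ∀ t ∈ R, G t ≤ G 0 → ∀ i, |t i| ≤ C i := by
    intro t htR htG i
    have hexp : ∀ j, exp (t j) ≤ G 0 / c j := fun j => (le_div_iff₀' (hc j)).2 <|
      (single_le_sum (f := fun j => c j * exp (t j))
        (fun k _ => (mul_pos (hc k) (exp_pos _)).le) (mem_univ j)).trans htG
    rw [le_div_iff₀' (hw i)]
    refine (mul_abs_le_of_sum_mul_eq_zero (fun j => (hw j).le) (hR t htR) i).trans ?_
    gcongr with j
    exacts [(hw j).le, hexp j]
  have hK : IsCompact ((R : Set (ι → ℝ)) ∩ {t | G t ≤ G 0}) :=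
    (isCompact_univ_pi fun i => isCompact_Icc (a := -C i) (b := C i)).of_isClosed_subset
      (R.closed_of_finiteDimensional.inter (isClosed_le hG continuous_const))
      fun t ⟨htR, htG⟩ i _ => abs_le.1 (hbox t htR htG i)
  obtain ⟨t, ⟨htR, htG⟩, hmin⟩ := hK.exists_isMinOn ⟨0, R.zero_mem, le_refl (G 0)⟩ hG.continuousOn
  refine ⟨t, htR, fun s hs => ?_⟩
  by_cases h : G s ≤ G 0
  · exact hmin ⟨hs, h⟩
  · exact htG.trans (not_le.1 h).le

theorem sum_mul_exp_mul_eq_zero_of_isMinOn {R : Submodule ℝ (ι → ℝ)} {c t s : ι → ℝ}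
    (ht : IsMinOn (fun t : ι → ℝ => ∑ i, c i * exp (t i)) R t) (htR : t ∈ R) (hs : s ∈ R) :
    ∑ i, c i * exp (t i) * s i = 0 := by
  have hmin : IsLocalMin (fun x : ℝ => ∑ i, c i * exp (t i + x * s i)) 0 :=
    Filter.Eventually.of_forall fun x => by
      simpa using ht (R.add_mem htR (R.smul_mem x hs))
  have hderiv : HasDerivAt (fun x : ℝ => ∑ i, c i * exp (t i + x * s i))
      (∑ i, c i * exp (t i) * s i) 0 := by
    have := HasDerivAt.fun_sum (u := univ) fun i _ =>
      ((((hasDerivAt_id (0 : ℝ)).mul_const (s i)).const_add (t i)).exp).const_mul (c i)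
    simpa [mul_assoc] using this
  exact hmin.hasDerivAt_eq_zero hderiv

variable {V : Type*} [AddCommGroup V] [Module ℝ V]

theorem exists_dual_sum_mul_exp_smul_eq_zero (v : ι → V) {c w : ι → ℝ} (hc : ∀ i, 0 < c i)
    (hw : ∀ i, 0 < w i) (hrel : ∑ i, w i • v i = 0) :
    ∃ φ : Module.Dual ℝ V, ∑ i, (c i * exp (φ (v i))) • v i = 0 := by
  let L : Module.Dual ℝ V →ₗ[ℝ] ι → ℝ := LinearMap.pi fun i => Module.Dual.eval ℝ V (v i)
  have hL : ∀ t ∈ LinearMap.range L, ∑ i, w i * t i = 0 := by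
    rintro _ ⟨φ, rfl⟩
    simpa [L, map_sum] using congr_arg φ hrel
  obtain ⟨_, ⟨φ, rfl⟩, hmin⟩ := exists_isMinOn_sum_mul_exp _ hc hw hL
  refine ⟨φ, (Module.forall_dual_apply_eq_zero_iff ℝ _).1 fun χ => ?_⟩
  simpa [L, map_sum, mul_assoc] using sum_mul_exp_mul_eq_zero_of_isMinOn hmin ⟨φ, rfl⟩ ⟨χ, rfl⟩

theorem apply_eq_of_apply_sub_sum_exp_smul {v : ι → V} {c : ι → ℝ} (hc : ∀ i, 0 < c i)
    {φ ψ : Module.Dual ℝ V}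
    (h : (ψ - φ) (∑ i, (c i * exp (ψ (v i))) • v i - ∑ i, (c i * exp (φ (v i))) • v i) = 0)
    (i : ι) : φ (v i) = ψ (v i) := by
  refine eq_of_sum_mul_exp_sub_exp_mul_sub_eq_zero (a := fun j => φ (v j)) (b := fun j => ψ (v j))
    hc (Eq.trans ?_ h) i
  simp only [map_sub, map_sum, map_smul, smul_eq_mul, LinearMap.sub_apply, ← sum_sub_distrib]
  exact sum_congr rfl fun j _ => by ring

end Galkin

section Levels

variable {V : Type*} [AddCommGroup V] [Module ℝ V] {ι : Type*} [Fintype ι]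

lemma sum_ite_smul_eq_sum_subtype {R M : Type*} [Semiring R] [AddCommMonoid M] [Module R M]
    (p : ι → Prop) [DecidablePred p] (a : ι → R) (x : ι → M) :
    ∑ i, (if p i then a i else 0) • x i = ∑ i : {i // p i}, a i • x i := by
  simp only [ite_smul, zero_smul]
  rw [← sum_filter]
  exact sum_subtype (p := p) _ (fun _ => mem_filter_univ _) _

variable (v : ι → V) (c δ : ι → ℝ)

/-- The space `B_{<ε}` of the paper. -/
def lowerSpan (ε : ℝ) : Submodule ℝ V := Submodule.span ℝ (v '' {i | δ i < ε})

noncomputable def levelSum (φ : Module.Dual ℝ V) (ε : ℝ) : V :=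
  ∑ i : {i // δ i = ε}, (c i * exp (φ (v i))) • v i

/-- The critical coefficient conditions, with the functional `φ` in the role of `⟨·, d⟩`. -/
def IsCritical (φ : Module.Dual ℝ V) : Prop := ∀ ε, levelSum v c δ φ ε ∈ lowerSpan v δ ε

/-- The tropical critical condition: `w` are barycentric weights, up to scaling, exhibiting `0` in
the relative interior of the convex hull of the level-`ε` vectors in `V ⧸ B_{<ε}`. -/
def IsTropicallyCritical : Prop :=
  ∀ ε, ∃ w : ι → ℝ, (∀ i, (δ i = ε → 0 < w i) ∧ (δ i ≠ ε → w i = 0)) ∧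
    ∑ i, w i • Submodule.Quotient.mk (p := lowerSpan v δ ε) (v i) = 0

variable {v c δ}

lemma levelSum_congr {φ ψ : Module.Dual ℝ V} {ε : ℝ} (h : ∀ i, δ i = ε → φ (v i) = ψ (v i)) :
    levelSum v c δ φ ε = levelSum v c δ ψ ε :=
  sum_congr rfl fun i _ => by rw [h i i.2]

lemma levelSum_eq_zero {φ : Module.Dual ℝ V} {ε : ℝ} (h : ∀ i, δ i ≠ ε) :
    levelSum v c δ φ ε = 0 :=
  have : IsEmpty {i // δ i = ε} := ⟨fun i => h i i.2⟩
  sum_of_isEmpty _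

/-- Galkin's lemma, applied in `V ⧸ B_{<ε}`. -/
theorem exists_levelSum_mem_lowerSpan (hc : ∀ i, 0 < c i) {ε : ℝ} {w : ι → ℝ}
    (hw : ∀ i, (δ i = ε → 0 < w i) ∧ (δ i ≠ ε → w i = 0))
    (hrel : ∑ i, w i • Submodule.Quotient.mk (p := lowerSpan v δ ε) (v i) = 0)
    (φ : Module.Dual ℝ V) :
    ∃ ψ : Module.Dual ℝ V, levelSum v c δ ψ ε ∈ lowerSpan v δ ε ∧
      ∀ x ∈ lowerSpan v δ ε, ψ x = φ x := by
  set B := lowerSpan v δ ε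
  have hrel' : ∑ i : {i // δ i = ε}, w i • Submodule.Quotient.mk (p := B) (v i) = 0 := by
    rw [← sum_ite_smul_eq_sum_subtype _ w fun i => Submodule.Quotient.mk (p := B) (v i), ← hrel]
    exact sum_congr rfl fun i _ => by split_ifs with h <;> simp [(hw i).2, h]
  obtain ⟨χ, hχ⟩ := exists_dual_sum_mul_exp_smul_eq_zero
    (fun i : {i // δ i = ε} => Submodule.Quotient.mk (p := B) (v i))
    (fun i => mul_pos (hc i) (exp_pos (φ (v i)))) (fun i => (hw i).1 i.2) hrel'
  refine ⟨φ + χ ∘ₗ B.mkQ, ?_, fun x hx => by simp [(Submodule.Quotient.mk_eq_zero B).2 hx]⟩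
  rw [← Submodule.Quotient.mk_eq_zero, ← hχ, levelSum, ← Submodule.mkQ_apply, map_sum]
  simp [exp_add, mul_assoc]

theorem apply_eq_of_levelSum_mem_lowerSpan (hc : ∀ i, 0 < c i) {φ ψ : Module.Dual ℝ V} {ε : ℝ}
    (hφ : levelSum v c δ φ ε ∈ lowerSpan v δ ε) (hψ : levelSum v c δ ψ ε ∈ lowerSpan v δ ε)
    (h : ∀ i, δ i < ε → φ (v i) = ψ (v i)) (i : ι) (hi : δ i = ε) : φ (v i) = ψ (v i) := by
  have hker : lowerSpan v δ ε ≤ LinearMap.ker (ψ - φ) :=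
    Submodule.span_le.2 <| by rintro _ ⟨j, hj, rfl⟩; simp [h j hj]
  exact apply_eq_of_apply_sub_sum_exp_smul (v := fun j : {j // δ j = ε} => v j) (fun j => hc j)
    (hker (sub_mem hψ hφ)) ⟨i, hi⟩

theorem exists_isCritical (hc : ∀ i, 0 < c i) (htrop : IsTropicallyCritical v δ) :
    ∃ φ, IsCritical v c δ φ := by
  suffices ∀ T : Finset ℝ, ∃ φ : Module.Dual ℝ V, ∀ ε ∈ T, levelSum v c δ φ ε ∈ lowerSpan v δ ε by
    obtain ⟨φ, hφ⟩ := this (univ.image δ)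
    refine ⟨φ, fun ε => ?_⟩
    by_cases hε : ∃ i, δ i = ε
    · obtain ⟨i, rfl⟩ := hε
      exact hφ _ (mem_image_of_mem δ (mem_univ i))
    · rw [levelSum_eq_zero fun i hi => hε ⟨i, hi⟩]
      exact zero_mem _
  intro T
  induction T using Finset.induction_on_max with
  | empty => exact ⟨0, by simp⟩
  | insert a T hlt ih =>
    obtain ⟨φ, hφ⟩ := ih
    obtain ⟨w, hw, hrel⟩ := htrop a
    obtain ⟨ψ, hψa, hψφ⟩ := exists_levelSum_mem_lowerSpan hc hw hrel φ
    refine ⟨ψ, forall_mem_insert _ _ _ |>.2 ⟨hψa, fun ε hε => ?_⟩⟩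
    -- the correction at the new top level `a` is invisible on the lower levels
    have hlower : ∀ i, δ i = ε → v i ∈ lowerSpan v δ a := fun i hi =>
      Submodule.subset_span ⟨i, show δ i < a from hi ▸ hlt ε hε, rfl⟩
    rw [levelSum_congr fun i hi => hψφ _ (hlower i hi)]
    exact hφ ε hε

theorem apply_eq_of_isCritical (hc : ∀ i, 0 < c i) {φ ψ : Module.Dual ℝ V}
    (hφ : IsCritical v c δ φ) (hψ : IsCritical v c δ ψ) (i : ι) : φ (v i) = ψ (v i) := by
  by_contra hi
  obtain ⟨j, hj, hmin⟩ :=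
    (univ.filter fun i => φ (v i) ≠ ψ (v i)).exists_min_image δ ⟨i, by simpa using hi⟩
  refine (mem_filter.1 hj).2 (apply_eq_of_levelSum_mem_lowerSpan hc (hφ _) (hψ _) ?_ j rfl)
  intro k hk
  by_contra hk'
  exact (hmin k (by simpa using hk')).not_gt hk

theorem existsUnique_isCritical (hspan : Submodule.span ℝ (Set.range v) = ⊤)
    (hc : ∀ i, 0 < c i) (htrop : IsTropicallyCritical v δ) :
    ∃! φ, IsCritical v c δ φ :=
  let ⟨φ, hφ⟩ := exists_isCritical hc htrop
  ⟨φ, hφ, fun _ hψ => LinearMap.ext_on_range hspan (apply_eq_of_isCritical hc hψ hφ)⟩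

end Levels

/-- Proposition 4.21 (p:coefficient): existence and uniqueness of the critical coefficient
`d_coeff`, given the tropical critical conditions (0 in the relative interior of the quotient
convex hull at each level `ε`). -/
theorem stmt_9 (r n : ℕ) (v : Fin n → (Fin r → ℝ))
    (hspan : Submodule.span ℝ (Set.range v) = ⊤)
    (c : Fin n → ℝ) (hc : ∀ i, 0 < c i)
    (δ : Fin n → ℝ) (hδ : ∀ i, 0 ≤ δ i)
    (B : ℝ → Submodule ℝ (Fin r → ℝ))
    (hB : ∀ ε : ℝ, B ε = Submodule.span ℝ {w : Fin r → ℝ | ∃ i, δ i < ε ∧ w = v i})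
    (htrop : ∀ ε : ℝ, 0 ≤ ε →
      ((∀ i, δ i ≠ ε) ∨
        ∃ w : Fin n → ℝ, (∀ i, (δ i = ε → 0 < w i) ∧ (δ i ≠ ε → w i = 0)) ∧
          (∑ i, w i) = 1 ∧
          (∑ i, w i • (Submodule.Quotient.mk (v i) : (Fin r → ℝ) ⧸ B ε)) = 0)) :
    ∃! d : Fin r → ℝ, ∀ ε : ℝ, 0 ≤ ε →
      (∑ i, (if δ i = ε then c i * Real.exp (∑ j, v i j * d j) else 0) • v i) ∈ B ε := by
  obtain rfl : B = lowerSpan v δ := funext fun ε => by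
    rw [hB, lowerSpan]
    congr 1
    ext
    simp [eq_comm]
  have hempty : ∀ {ε}, ε < 0 → ∀ i, δ i ≠ ε := fun hε i hi => (hδ i).not_gt (hi ▸ hε)
  have htrop' : IsTropicallyCritical v δ := by
    intro ε
    rcases (lt_or_ge ε 0).elim (Or.inl ∘ hempty) (htrop ε) with hε | ⟨w, hw, -, hrel⟩
    · exact ⟨0, fun i => ⟨fun h => (hε i h).elim, fun _ => rfl⟩, by simp⟩
    · exact ⟨w, hw, hrel⟩
  refine (dotProductEquiv ℝ (Fin r)).toEquiv.existsUnique_congr (fun d => ?_) |>.2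
    (existsUnique_isCritical hspan hc htrop')
  have hsum : ∀ ε, ∑ i, (if δ i = ε then c i * exp (∑ j, v i j * d j) else 0) • v i =
      levelSum v c δ (dotProductEquiv ℝ (Fin r) d) ε := fun ε => by
    rw [sum_ite_smul_eq_sum_subtype]
    simp [levelSum, dotProduct, mul_comm]
  simp only [hsum]
  refine ⟨fun h ε => ?_, fun h ε _ => h ε⟩
  rcases lt_or_ge ε 0 with hε | hε
  · rw [levelSum_eq_zero (hempty hε)]
    exact zero_mem _
  · exact h ε hε
end

section
/- Let v_1,...,v_n ∈ ℝ^r, c_1,...,c_n > 0, and δ_1,...,δ_n ∈ ℝ_{≥0}, with B_{<ε} := span {v_i : δ_i < ε} and B_{≤ε} := span {v_i : δ_i ≤ ε}. Assume the bilinear form B_h on B_{<ε}^⊥ given by (u_1, u_2) ↦ Σ_{i : δ_i = ε} c_i ⟨v_i, u_1⟩ ⟨v_i, u_2⟩ induces a positive definite (hence nondegenerate) form on B_{<ε}^⊥ / B_{≤ε}^⊥ for every ε. If w ∈ ℝ^r satisfies, for all ε ≥ 0, Σ_{i : δ_i = ε} c_i ⟨v_i, w⟩ v_i ∈ B_{<ε},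 then w = 0. -/
open scoped Classical

/-!
Induct on the level `ε`. If `w` is orthogonal to `B_{<ε}`, pairing the level-`ε` vector
`∑_{δ_i = ε} c_i ⟨v_i, w⟩ v_i ∈ B_{<ε}` with `w` gives `∑_{δ_i = ε} c_i ⟨v_i, w⟩² = 0`, and
definiteness upgrades this to `w ⊥ B_{≤ε}`. Hence `w` is orthogonal to every `v_i`, which span.
-/

theorem Finite.induction_on_lt_comp {ι α : Type*} [Finite ι] [Preorder α] (δ : ι → α)
    {P : ι → Prop} (h : ∀ i, (∀ j, δ j < δ i → P j) → P i) (i : ι) : P i :=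
  (InvImage.wf (fun i => (⟨δ i, i, rfl⟩ : Set.range δ)) wellFounded_lt).induction i h

section DotProduct

variable {R m ι α : Type*} [Fintype m]

theorem dotProduct_eq_zero_of_mem_span [CommRing R] {S : Set (m → R)} {w x : m → R}
    (hS : ∀ s ∈ S, s ⬝ᵥ w = 0) (hx : x ∈ Submodule.span R S) : x ⬝ᵥ w = 0 :=
  (Submodule.span_le (p := LinearMap.ker ((dotProductBilin R R).flip w))).mpr hS hx

theorem eq_zero_of_dotProduct_eq_zero_of_span_eq_top [CommRing R] [LinearOrder R]
    [IsStrictOrderedRing R] {v : ι → m → R} (hspan : Submodule.span R (Set.range v) = ⊤)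
    {w : m → R} (hw : ∀ i, v i ⬝ᵥ w = 0) : w = 0 :=
  dotProduct_self_eq_zero.mp <| dotProduct_eq_zero_of_mem_span (by simpa using hw)
    (hspan ▸ Submodule.mem_top)

theorem sum_ite_mul_self_eq_zero_of_sum_ite_smul_mem_span [CommRing R] [Fintype ι] [LT α] [DecidableEq α]
    {v : ι → m → R} {c : ι → R} {δ : ι → α} {ε : α} {w : m → R}
    (hw : (∑ i, (if δ i = ε then c i * (v i ⬝ᵥ w) else 0) • v i) ∈
        Submodule.span R {x | ∃ i, δ i < ε ∧ x = v i})
    (hlt : ∀ i, δ i < ε → v i ⬝ᵥ w = 0) :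
    (∑ i, if δ i = ε then c i * (v i ⬝ᵥ w) * (v i ⬝ᵥ w) else 0) = 0 := by
  have h := dotProduct_eq_zero_of_mem_span (by rintro _ ⟨i, hi, rfl⟩; exact hlt i hi) hw
  simpa only [sum_dotProduct, smul_dotProduct, smul_eq_mul, ite_mul, zero_mul] using h

end DotProduct

theorem stmt_10_general (r n : ℕ) (v : Fin n → (Fin r → ℝ))
    (hspan : Submodule.span ℝ (Set.range v) = ⊤)
    (c : Fin n → ℝ)
    (δ : Fin n → ℝ) (hδ : ∀ i, 0 ≤ δ i)
    (hposdef : ∀ ε : ℝ, 0 ≤ ε → ∀ u : Fin r → ℝ,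
      (∀ i, δ i < ε → (∑ j, v i j * u j) = 0) →
      (∑ i, if δ i = ε then c i * (∑ j, v i j * u j) * (∑ j, v i j * u j) else 0) = 0 →
      ∀ i, δ i ≤ ε → (∑ j, v i j * u j) = 0)
    (w : Fin r → ℝ)
    (hw : ∀ ε : ℝ, 0 ≤ ε →
      (∑ i, (if δ i = ε then c i * (∑ j, v i j * w j) else 0) • v i) ∈
        Submodule.span ℝ {x : Fin r → ℝ | ∃ i, δ i < ε ∧ x = v i}) :
    w = 0 := by
  -- `∑ j, v i j * u j` is `v i ⬝ᵥ u` definitionally.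
  refine eq_zero_of_dotProduct_eq_zero_of_span_eq_top hspan
    (Finite.induction_on_lt_comp (P := fun i => v i ⬝ᵥ w = 0) δ fun i hlt => ?_)
  exact hposdef (δ i) (hδ i) w hlt
    (sum_ite_mul_self_eq_zero_of_sum_ite_smul_mem_span (hw (δ i) (hδ i)) hlt) i le_rfl

/-- Lemma 4.30 (l:wvanishing): the kernel-vanishing lemma. If the induced forms on
`B_{<ε}^⊥ / B_{≤ε}^⊥` are positive definite and `w` satisfies all the level conditions,
then `w = 0`. -/
theorem stmt_10 (r n : ℕ) (v : Fin n → (Fin r → ℝ))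
    (hspan : Submodule.span ℝ (Set.range v) = ⊤)
    (c : Fin n → ℝ) (hc : ∀ i, 0 < c i)
    (δ : Fin n → ℝ) (hδ : ∀ i, 0 ≤ δ i)
    (hposdef : ∀ ε : ℝ, 0 ≤ ε → ∀ u : Fin r → ℝ,
      (∀ i, δ i < ε → (∑ j, v i j * u j) = 0) →
      (∑ i, if δ i = ε then c i * (∑ j, v i j * u j) * (∑ j, v i j * u j) else 0) = 0 →
      ∀ i, δ i ≤ ε → (∑ j, v i j * u j) = 0)
    (w : Fin r → ℝ)
    (hw : ∀ ε : ℝ, 0 ≤ ε →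
      (∑ i, (if δ i = ε then c i * (∑ j, v i j * w j) else 0) • v i) ∈
        Submodule.span ℝ {x : Fin r → ℝ | ∃ i, δ i < ε ∧ x = v i}) :
    w = 0 :=
  stmt_10_general r n v hspan c δ hδ hposdef w hw
end

section
/- Let 0 → ℝ →^η V →^β U → 0 be a short exact sequence of finite-dimensional real vector spaces, let 𝒲 ⊂ V be a finite set such that β(convexHull 𝒲) is full-dimensional in U with 0 in its interior, and assume dim U > 0. Let 𝒲̄ = { w ∈ 𝒲 : β(w) ≠ 0 } and Δ̄ = convexHull 𝒲̄, with minimal height τ̄ = min { c : η(c) ∈ Δ̄ }. Let F be the minimal face of Δ̄ containing η(τ̄) and E the linear span of F − η(τ̄). Then ker(β) ∩ E = {0}; equivalently, the induced map η' : ℝ → V/E is injective and the sequence 0 → ℝ → V/E → U/β(E) → 0 is exact. -/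
/-!
Write `x = η τ̄` and `Δ̄ = conv 𝒲̄`. Minimality of `τ̄` says that no ray from `x` in direction
`-η 1` enters `Δ̄`, i.e. `-η 1` lies outside the cone generated by `𝒲̄ - x`. This cone is finitely
generated, hence closed (conic Carathéodory), so Farkas' lemma yields a functional `f` with
`f x ≤ f` on `Δ̄` and `f (η 1) > 0`. The face of `Δ̄` exposed by `f` contains `x`, hence contains
the minimal face `F`, so `f` vanishes on `E = span (F - x)` but not on `ker β = ℝ ∙ η 1`.
-/

namespace PointedCone

section Caratheodory

variable {𝕜 V : Type*} [Field 𝕜] [LinearOrder 𝕜] [IsStrictOrderedRing 𝕜]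
  [AddCommGroup V] [Module 𝕜 V]

theorem mem_hull_finset_iff {A : Finset V} {y : V} :
    y ∈ hull 𝕜 (A : Set V) ↔ ∃ a : V → 𝕜, (∀ v ∈ A, 0 ≤ a v) ∧ ∑ v ∈ A, a v • v = y := by
  classical
  rw [Submodule.mem_span_finset]
  constructor
  · rintro ⟨f, -, rfl⟩
    exact ⟨fun v ↦ f v, fun v _ ↦ (f v).2, rfl⟩
  · rintro ⟨a, ha, rfl⟩
    refine ⟨fun v ↦ if h : v ∈ A then ⟨a v, ha v h⟩ else 0, fun v hv ↦ ?_, ?_⟩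
    · by_contra hvA
      exact hv (dif_neg hvA)
    · refine Finset.sum_congr rfl fun v hv ↦ ?_
      simp only [dif_pos hv, Nonneg.mk_smul]

/-- Subtracting a multiple of a linear dependence, chosen by a minimum-ratio test, keeps the
coefficients nonnegative and makes one of them vanish. -/
theorem exists_mem_hull_erase_of_not_linearIndepOn [DecidableEq V] {A : Finset V}
    (hA : ¬LinearIndepOn 𝕜 id (A : Set V)) {y : V} (hy : y ∈ hull 𝕜 (A : Set V)) :
    ∃ v ∈ A, y ∈ hull 𝕜 (A.erase v : Set V) := by
  obtain ⟨a, ha, rfl⟩ := mem_hull_finset_iff.1 hy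
  obtain ⟨g, hg, i, hiA, hi⟩ := not_linearIndepOn_finset_iff.1 hA
  wlog hgi : 0 < g i generalizing g
  · refine this (-g) ?_ (neg_ne_zero.2 hi) (neg_pos.2 (lt_of_le_of_ne (not_lt.1 hgi) hi))
    simpa [neg_smul] using hg
  obtain ⟨v₀, hv₀, hmin⟩ := (A.filter (0 < g ·)).exists_min_image (fun v ↦ a v / g v)
    ⟨i, Finset.mem_filter.2 ⟨hiA, hgi⟩⟩
  obtain ⟨hv₀A, hgv₀⟩ := Finset.mem_filter.1 hv₀
  set t := a v₀ / g v₀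
  have ht : 0 ≤ t := div_nonneg (ha v₀ hv₀A) hgv₀.le
  refine ⟨v₀, hv₀A, mem_hull_finset_iff.2 ⟨fun v ↦ a v - t * g v, fun v hv ↦ ?_, ?_⟩⟩
  · have hvA := Finset.mem_of_mem_erase hv
    rw [sub_nonneg]
    rcases lt_or_ge 0 (g v) with hgv | hgv
    · exact (le_div_iff₀ hgv).1 (hmin v (Finset.mem_filter.2 ⟨hvA, hgv⟩))
    · exact (mul_nonpos_of_nonneg_of_nonpos ht hgv).trans (ha v hvA)
  · rw [Finset.sum_erase A (by simp [t, div_mul_cancel₀ _ hgv₀.ne'])]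
    simp only [id] at hg
    simp [sub_smul, Finset.sum_sub_distrib, mul_smul, ← Finset.smul_sum, hg]

theorem exists_linearIndepOn_mem_hull (A : Finset V) {y : V} (hy : y ∈ hull 𝕜 (A : Set V)) :
    ∃ B ⊆ A, LinearIndepOn 𝕜 id (B : Set V) ∧ y ∈ hull 𝕜 (B : Set V) := by
  classical
  induction A using Finset.strongInduction with
  | H A ih =>
    by_cases hA : LinearIndepOn 𝕜 id (A : Set V)
    · exact ⟨A, subset_rfl, hA, hy⟩
    obtain ⟨v, hv, hy'⟩ := exists_mem_hull_erase_of_not_linearIndepOn hA hy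
    obtain ⟨B, hBA, hB, hyB⟩ := ih _ (Finset.erase_ssubset hv) hy'
    exact ⟨B, hBA.trans (Finset.erase_subset _ _), hB, hyB⟩

end Caratheodory

end PointedCone

theorem Convex.exists_pos_add_smul_mem_of_mem_hull {V : Type*} [AddCommGroup V] [Module ℝ V]
    {P : Set V} (hP : Convex ℝ P) {x d : V} (hx : x ∈ P)
    (hd : d ∈ PointedCone.hull ℝ ((· - x) '' P)) : ∃ t : ℝ, 0 < t ∧ x + t • d ∈ P := by
  let C : PointedCone ℝ V :=
    { carrier := {d | ∃ t : ℝ, 0 < t ∧ x + t • d ∈ P}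
      zero_mem' := ⟨1, one_pos, by simpa using hx⟩
      add_mem' := by
        rintro d e ⟨t, ht, hd⟩ ⟨s, hs, he⟩
        -- `x + (t * s / (s + t)) • (d + e)` is a convex combination of `x + t • d` and `x + s • e`
        refine ⟨t * s / (s + t), by positivity, ?_⟩
        convert hP hd he (a := s / (s + t)) (b := t / (s + t)) (by positivity) (by positivity)
          (by field_simp) using 1
        match_scalars <;> field_simp
      smul_mem' := by
        rintro ⟨c, hc⟩ d ⟨t, ht, hd⟩
        rcases hc.eq_or_lt with rfl | hc
        · exact ⟨1, one_pos, by simpa using hx⟩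
        refine ⟨t / c, div_pos ht hc, ?_⟩
        simpa [Nonneg.mk_smul, smul_smul, div_mul_cancel₀ t hc.ne'] using hd }
  refine (Submodule.span_le (p := C)).2 ?_ hd
  rintro _ ⟨v, hv, rfl⟩
  exact ⟨1, one_pos, by simpa using hv⟩

section Topology

variable {V : Type*} [AddCommGroup V] [Module ℝ V] [TopologicalSpace V]
  [IsTopologicalAddGroup V] [ContinuousSMul ℝ V] [T2Space V]

namespace PointedCone

theorem isClosed_hull_of_linearIndepOn {B : Finset V}
    (hB : LinearIndepOn ℝ id (B : Set V)) : IsClosed (hull ℝ (B : Set V) : Set V) := by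
  let L := Fintype.linearCombination ℝ (Subtype.val : B → V)
  have hL : Topology.IsClosedEmbedding L :=
    LinearMap.isClosedEmbedding_of_injective
      (LinearMap.ker_eq_bot.2 hB.fintypeLinearCombination_injective)
  have : (hull ℝ (B : Set V) : Set V) = L '' Set.Ici 0 := by
    ext y
    simp only [SetLike.mem_coe, Submodule.mem_span_finset', Set.mem_image, Set.mem_Ici]
    constructor
    · rintro ⟨f, rfl⟩
      exact ⟨fun v ↦ f v, fun v ↦ (f v).2, rfl⟩
    · rintro ⟨c, hc, rfl⟩
      exact ⟨fun v ↦ ⟨c v, hc v⟩, rfl⟩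
  rw [this]
  exact hL.isClosedMap _ isClosed_Ici

theorem isClosed_hull_finset (A : Finset V) : IsClosed (hull ℝ (A : Set V) : Set V) := by
  classical
  have : (hull ℝ (A : Set V) : Set V) =
      ⋃ B ∈ A.powerset.filter fun B : Finset V ↦ LinearIndepOn ℝ id (B : Set V),
        (hull ℝ (B : Set V) : Set V) := by
    ext y
    simp only [SetLike.mem_coe, Set.mem_iUnion, Finset.mem_filter, Finset.mem_powerset,
      exists_prop]
    constructor
    · intro hy
      obtain ⟨B, hBA, hB, hyB⟩ := exists_linearIndepOn_mem_hull A hy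
      exact ⟨B, ⟨hBA, hB⟩, hyB⟩
    · rintro ⟨B, ⟨hBA, -⟩, hyB⟩
      exact Submodule.span_mono (Finset.coe_subset.2 hBA) hyB
  rw [this]
  exact isClosed_biUnion_finset fun B hB ↦ isClosed_hull_of_linearIndepOn (Finset.mem_filter.1 hB).2

theorem exists_dual_nonneg_of_notMem_hull [LocallyConvexSpace ℝ V] {A : Finset V}
    {y : V} (hy : y ∉ hull ℝ (A : Set V)) :
    ∃ f : StrongDual ℝ V, (∀ v ∈ A, 0 ≤ f v) ∧ f y < 0 := by
  obtain ⟨f, hf, hfy⟩ :=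
    ProperCone.hyperplane_separation_point ⟨hull ℝ (A : Set V), isClosed_hull_finset A⟩ hy
  exact ⟨f, fun v hv ↦ hf v (subset_hull hv), hfy⟩

end PointedCone

/-- The finiteness of `W` matters: for a disc, a boundary point and a tangent direction `d`,
no such `f` exists. -/
theorem exists_supporting_dual_of_forall_add_smul_notMem_convexHull [LocallyConvexSpace ℝ V]
    {W : Finset V} {x d : V} (hx : x ∈ convexHull ℝ (W : Set V))
    (hd : ∀ t : ℝ, 0 < t → x + t • d ∉ convexHull ℝ (W : Set V)) :
    ∃ f : StrongDual ℝ V, (∀ u ∈ convexHull ℝ (W : Set V), f x ≤ f u) ∧ f d < 0 := by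
  classical
  have hdW : d ∉ PointedCone.hull ℝ ((W.image (· - x) : Finset V) : Set V) := by
    intro hdW
    rw [Finset.coe_image] at hdW
    obtain ⟨t, ht, hmem⟩ := (convex_convexHull ℝ _).exists_pos_add_smul_mem_of_mem_hull hx
      (Submodule.span_mono (Set.image_mono (subset_convexHull ℝ _)) hdW)
    exact hd t ht hmem
  obtain ⟨f, hfW, hfd⟩ := PointedCone.exists_dual_nonneg_of_notMem_hull hdW
  refine ⟨f, fun u hu ↦ ?_, hfd⟩
  refine convexHull_min (fun v hv ↦ ?_) (convex_halfSpace_ge f.isLinear (f x)) hu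
  simpa using hfW _ (Finset.mem_image_of_mem _ hv)

end Topology

theorem stmt_16_general {V U : Type*}
    [NormedAddCommGroup V] [NormedSpace ℝ V]
    [NormedAddCommGroup U] [NormedSpace ℝ U]
    (η : ℝ →ₗ[ℝ] V) (β : V →ₗ[ℝ] U)
    (hexact : LinearMap.range η = LinearMap.ker β)
    (s : Finset V)
    (τ : ℝ)
    (hτ : IsLeast {x : ℝ | η x ∈ convexHull ℝ {w ∈ (s : Set V) | β w ≠ 0}} τ)
    (F : Set V)
    (hFmin : ∀ F' : Set V,
      (∃ φ : V →ₗ[ℝ] ℝ,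
        F' = {w ∈ convexHull ℝ {w ∈ (s : Set V) | β w ≠ 0} |
          ∀ u ∈ convexHull ℝ {w ∈ (s : Set V) | β w ≠ 0}, φ w ≤ φ u}) →
      η τ ∈ F' → F ⊆ F') :
    Disjoint (LinearMap.ker β) (Submodule.span ℝ ((fun x => x - η τ) '' F)) := by
  classical
  have hW : {w ∈ (s : Set V) | β w ≠ 0} = ((s.filter (β · ≠ 0) : Finset V) : Set V) :=
    (Finset.coe_filter _ _).symm
  rw [hW] at hτ hFmin
  set Δ := convexHull ℝ ((s.filter (β · ≠ 0) : Finset V) : Set V)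
  obtain ⟨f, hfΔ, hf⟩ := exists_supporting_dual_of_forall_add_smul_notMem_convexHull (d := -η 1)
    hτ.1 fun t ht hmem ↦ by
      have hηt : η (τ - t) = η τ + t • -η 1 := by
        rw [map_sub, smul_neg, ← map_smul, smul_eq_mul, mul_one, sub_eq_add_neg]
      have : τ ≤ τ - t := hτ.2 (show η (τ - t) ∈ Δ by rwa [hηt])
      linarith
  have hFf : F ⊆ {w ∈ Δ | ∀ u ∈ Δ, f w ≤ f u} := hFmin _ ⟨f, rfl⟩ ⟨hτ.1, hfΔ⟩
  have hspan : Submodule.span ℝ ((· - η τ) '' F) ≤ LinearMap.ker (f : V →ₗ[ℝ] ℝ) := by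
    refine Submodule.span_le.2 ?_
    rintro _ ⟨w, hw, rfl⟩
    obtain ⟨hwΔ, hwmin⟩ := hFf hw
    have : f w = f (η τ) := le_antisymm (hwmin _ hτ.1) (hfΔ w hwΔ)
    simp [this]
  rw [Submodule.disjoint_def]
  rintro y hyβ hyE
  obtain ⟨c, rfl⟩ := hexact ▸ hyβ
  have hfc : f (η c) = 0 := by simpa using hspan hyE
  rw [show η c = c • η 1 by rw [← map_smul, smul_eq_mul, mul_one], map_smul, smul_eq_mul] at hfc
  have hη1 : 0 < f (η 1) := by simpa using hf
  simp [(mul_eq_zero.1 hfc).resolve_right hη1.ne']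

/-- Exactness part of Lemma 4.16 (l:goodLaurent): in a complete Newton datum
`0 → ℝ →η V →β U → 0`, with `Δ̄` the reduced polytope, `τ̄` its minimal height, `F` the minimal
face of `Δ̄` containing `η τ̄`, and `E = span(F - η τ̄)`, one has `ker β ∩ E = {0}`. -/
theorem stmt_16 {V U : Type*}
    [NormedAddCommGroup V] [NormedSpace ℝ V] [FiniteDimensional ℝ V]
    [NormedAddCommGroup U] [NormedSpace ℝ U] [FiniteDimensional ℝ U]
    (η : ℝ →ₗ[ℝ] V) (β : V →ₗ[ℝ] U)
    (hη : Function.Injective η) (hβ : Function.Surjective β)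
    (hexact : LinearMap.range η = LinearMap.ker β)
    (s : Finset V)
    (hfull : (0 : U) ∈ interior (β '' (convexHull ℝ (s : Set V))))
    (hdim : 0 < Module.finrank ℝ U)
    (τ : ℝ)
    (hτ : IsLeast {x : ℝ | η x ∈ convexHull ℝ {w ∈ (s : Set V) | β w ≠ 0}} τ)
    (F : Set V)
    (hFface : ∃ φ : V →ₗ[ℝ] ℝ,
      F = {w ∈ convexHull ℝ {w ∈ (s : Set V) | β w ≠ 0} |
        ∀ u ∈ convexHull ℝ {w ∈ (s : Set V) | β w ≠ 0}, φ w ≤ φ u})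
    (hFmem : η τ ∈ F)
    (hFmin : ∀ F' : Set V,
      (∃ φ : V →ₗ[ℝ] ℝ,
        F' = {w ∈ convexHull ℝ {w ∈ (s : Set V) | β w ≠ 0} |
          ∀ u ∈ convexHull ℝ {w ∈ (s : Set V) | β w ≠ 0}, φ w ≤ φ u}) →
      η τ ∈ F' → F ⊆ F') :
    Disjoint (LinearMap.ker β) (Submodule.span ℝ ((fun x => x - η τ) '' F)) :=
  stmt_16_general η β hexact s τ hτ F hFmin
end

section
/- In the setting of the recursion step for a complete Newton datum (exact sequence 0 → ℝ →^η V →^β U → 0, finite 𝒲 ⊂ V with 0 interior to β(convexHull 𝒲), dim U > 0, reduced polytope Δ̄ = convexHull { w ∈ 𝒲 : β(w) ≠ 0 } with minimal height τ̄, minimal face F ∋ η(τ̄), E = span(F − η(τ̄)), σ : V → V/E the projection): the point σ(η(τ̄)) is a vertex of the polytope σ(Δ̄) ⊂ V/E. -/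
/-!
The functional `φ` exposing the face `F` is constant on `F`, so it vanishes on
`E = span (F - η τ)` and descends to `V ⧸ E`. There `σ (η τ)` is its unique minimizer
on `σ Δ̄`: any point of `Δ̄` at the minimal level lies in `F`, which `σ` collapses to `σ (η τ)`.
-/

open Set

section

variable {𝕜 V : Type*} [Field 𝕜] [LinearOrder 𝕜] [IsStrictOrderedRing 𝕜]
  [AddCommGroup V] [Module 𝕜 V]

theorem mem_extremePoints_of_unique_min {A : Set V} {x : V} (ψ : V →ₗ[𝕜] 𝕜) (hx : x ∈ A)
    (hmin : ∀ y ∈ A, ψ x ≤ ψ y) (huniq : ∀ y ∈ A, ψ y = ψ x → y = x) :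
    x ∈ A.extremePoints 𝕜 :=
  ⟨hx, fun _ hx₁ _ hx₂ hseg => huniq _ hx₁ <|
    ((ψ.concaveOn convex_univ).left_le_of_le_right trivial trivial hseg (hmin _ hx₂)).antisymm
      (hmin _ hx₁)⟩

theorem mkQ_mem_extremePoints_of_mem_minimizing_face {C : Set V} {p : V} (φ : V →ₗ[𝕜] 𝕜)
    (hp : p ∈ C) (hmin : ∀ u ∈ C, φ p ≤ φ u) :
    (Submodule.span 𝕜 ((fun x => x - p) '' {w ∈ C | ∀ u ∈ C, φ w ≤ φ u})).mkQ p ∈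
      ((Submodule.span 𝕜 ((fun x => x - p) '' {w ∈ C | ∀ u ∈ C, φ w ≤ φ u})).mkQ ''
        C).extremePoints 𝕜 := by
  set F := {w ∈ C | ∀ u ∈ C, φ w ≤ φ u}
  set E := Submodule.span 𝕜 ((fun x => x - p) '' F)
  have hFlevel : ∀ w ∈ F, φ w = φ p := fun w hw => (hw.2 p hp).antisymm (hmin w hw.1)
  have hEker : E ≤ LinearMap.ker φ := by
    rw [Submodule.span_le]
    rintro _ ⟨w, hw, rfl⟩
    simp [hFlevel w hw]
  refine mem_extremePoints_of_unique_min (E.liftQ φ hEker) (mem_image_of_mem _ hp) ?_ ?_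
  · rintro _ ⟨u, hu, rfl⟩
    exact hmin u hu
  · rintro _ ⟨a, ha, rfl⟩ hφa
    have haF : a ∈ F := ⟨ha, fun u hu => (hφa ▸ hmin u hu :)⟩
    exact (Submodule.Quotient.eq E).2 (Submodule.subset_span ⟨a, haF, rfl⟩)

end

theorem stmt_17_general {V U : Type*}
    [NormedAddCommGroup V] [NormedSpace ℝ V]
    [NormedAddCommGroup U] [NormedSpace ℝ U]
    (η : ℝ →ₗ[ℝ] V) (β : V →ₗ[ℝ] U)
    (s : Finset V)
    (τ : ℝ)
    (F : Set V)
    (hFface : ∃ φ : V →ₗ[ℝ] ℝ,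
      F = {w ∈ convexHull ℝ {w ∈ (s : Set V) | β w ≠ 0} |
        ∀ u ∈ convexHull ℝ {w ∈ (s : Set V) | β w ≠ 0}, φ w ≤ φ u})
    (hFmem : η τ ∈ F)
    (E : Submodule ℝ V)
    (hE : E = Submodule.span ℝ ((fun x => x - η τ) '' F)) :
    E.mkQ (η τ) ∈
      Set.extremePoints ℝ (E.mkQ '' (convexHull ℝ {w ∈ (s : Set V) | β w ≠ 0})) := by
  obtain ⟨φ, rfl⟩ := hFface
  subst hE
  exact mkQ_mem_extremePoints_of_mem_minimizing_face φ hFmem.1 hFmem.2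

/-- Part (2) of Lemma 4.16 (l:goodLaurent): in the recursion step for a complete Newton datum,
the image `σ(η τ̄)` of the lowest point of the reduced polytope `Δ̄` under the projection
`σ : V → V/E` is a vertex (extreme point) of the projected polytope `σ(Δ̄)`. -/
theorem stmt_17 {V U : Type*}
    [NormedAddCommGroup V] [NormedSpace ℝ V] [FiniteDimensional ℝ V]
    [NormedAddCommGroup U] [NormedSpace ℝ U] [FiniteDimensional ℝ U]
    (η : ℝ →ₗ[ℝ] V) (β : V →ₗ[ℝ] U)
    (hη : Function.Injective η) (hβ : Function.Surjective β)
    (hexact : LinearMap.range η = LinearMap.ker β)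
    (s : Finset V)
    (hfull : (0 : U) ∈ interior (β '' (convexHull ℝ (s : Set V))))
    (hdim : 0 < Module.finrank ℝ U)
    (τ : ℝ)
    (hτ : IsLeast {x : ℝ | η x ∈ convexHull ℝ {w ∈ (s : Set V) | β w ≠ 0}} τ)
    (F : Set V)
    (hFface : ∃ φ : V →ₗ[ℝ] ℝ,
      F = {w ∈ convexHull ℝ {w ∈ (s : Set V) | β w ≠ 0} |
        ∀ u ∈ convexHull ℝ {w ∈ (s : Set V) | β w ≠ 0}, φ w ≤ φ u})
    (hFmem : η τ ∈ F)
    (hFmin : ∀ F' : Set V,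
      (∃ φ : V →ₗ[ℝ] ℝ,
        F' = {w ∈ convexHull ℝ {w ∈ (s : Set V) | β w ≠ 0} |
          ∀ u ∈ convexHull ℝ {w ∈ (s : Set V) | β w ≠ 0}, φ w ≤ φ u}) →
      η τ ∈ F' → F ⊆ F')
    (E : Submodule ℝ V)
    (hE : E = Submodule.span ℝ ((fun x => x - η τ) '' F)) :
    E.mkQ (η τ) ∈
      Set.extremePoints ℝ (E.mkQ '' (convexHull ℝ {w ∈ (s : Set V) | β w ≠ 0})) :=
  stmt_17_general η β s τ F hFface hFmem E hE
end
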